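/- arXiv:2409.12527 — 6 statements merged into one kernel-verified Lean document; each statement's English description precedes it below -/
import Mathlib

section
/- Let Λ ⊆ ℝⁿ be an odd self-dual lattice (integral, equal to its dual, containing a vector of odd norm) and let δ ∈ Λ satisfy: δ/2 ∉ Λ, δ/2 is not in the shadow S(Λ) = Λ₀* \ Λ (where Λ₀ is the sublattice of even-norm vectors), and δ² ∈ 4ℤ. Define Λ_even = {λ ∈ Λ : δ·λ ∈ 2ℤ} and Λ_odd = {λ ∈ Λ : δ·λ ∈ 2ℤ+1}. Then both lattices Λ⁺ = Λ_even ∪ (Λ_even + δ/2) and Λ⁻ = Λ_even ∪ (Λ_odd + δ/2) are odd self-dual lattices. -/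
open scoped BigOperators

namespace PaperFormal

/-- Standard dot product on `ℝⁿ`. -/
def dot {n : ℕ} (x y : Fin n → ℝ) : ℝ := ∑ i, x i * y i

/-- Squared norm. -/
def nsq {n : ℕ} (x : Fin n → ℝ) : ℝ := dot x x

/-- The dual of a set of vectors: all vectors pairing integrally with every element. -/
def dualSet {n : ℕ} (L : Set (Fin n → ℝ)) : Set (Fin n → ℝ) :=
  {x | ∀ l ∈ L, ∃ k : ℤ, dot l x = (k : ℝ)}

/-- The even-norm part `Λ₀` of a lattice. -/
def evenSub {n : ℕ} (L : Set (Fin n → ℝ)) : Set (Fin n → ℝ) :=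
  {l | l ∈ L ∧ ∃ k : ℤ, dot l l = 2 * (k : ℝ)}

/-- The shadow `S(Λ) = Λ₀* \ Λ`. -/
def shadow {n : ℕ} (L : Set (Fin n → ℝ)) : Set (Fin n → ℝ) :=
  dualSet (evenSub L) \ L

/-- An odd self-dual lattice: equal to its dual, and containing a vector of odd norm. -/
def IsOddSelfDual {n : ℕ} (L : Set (Fin n → ℝ)) : Prop :=
  L = dualSet L ∧ ∃ v ∈ L, ∃ k : ℤ, dot v v = 2 * (k : ℝ) + 1

/-- `χ` is a characteristic vector of `L`: `λ·λ ≡ χ·λ (mod 2)` for all `λ ∈ L`. -/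
def IsCharacteristic {n : ℕ} (L : Set (Fin n → ℝ)) (χ : Fin n → ℝ) : Prop :=
  χ ∈ L ∧ ∀ l ∈ L, ∃ k : ℤ, dot l l - dot χ l = 2 * (k : ℝ)

/-- `Λ_{δ-even}`. -/
def deltaEven {n : ℕ} (L : Set (Fin n → ℝ)) (δ : Fin n → ℝ) : Set (Fin n → ℝ) :=
  {l | l ∈ L ∧ ∃ k : ℤ, dot δ l = 2 * (k : ℝ)}

/-- `Λ_{δ-odd}`. -/
def deltaOdd {n : ℕ} (L : Set (Fin n → ℝ)) (δ : Fin n → ℝ) : Set (Fin n → ℝ) :=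
  {l | l ∈ L ∧ ∃ k : ℤ, dot δ l = 2 * (k : ℝ) + 1}

/-- Translate a set of vectors by `v`. -/
def shiftSet {n : ℕ} (A : Set (Fin n → ℝ)) (v : Fin n → ℝ) : Set (Fin n → ℝ) :=
  (fun x => x + v) '' A

/-- The orbifold lattice `Λ⁺ = Λ_even ∪ (Λ_even + δ/2)`. -/
def orbPlus {n : ℕ} (L : Set (Fin n → ℝ)) (δ : Fin n → ℝ) : Set (Fin n → ℝ) :=
  deltaEven L δ ∪ shiftSet (deltaEven L δ) ((2 : ℝ)⁻¹ • δ)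

/-- The orbifold lattice `Λ⁻ = Λ_even ∪ (Λ_odd + δ/2)`. -/
def orbMinus {n : ℕ} (L : Set (Fin n → ℝ)) (δ : Fin n → ℝ) : Set (Fin n → ℝ) :=
  deltaEven L δ ∪ shiftSet (deltaOdd L δ) ((2 : ℝ)⁻¹ • δ)

/-- The gauging condition for a shift vector: `δ ∈ Λ`, `δ/2 ∉ Λ ∪ S(Λ)`, `δ² ∈ 4ℤ`. -/
def GaugingCondition {n : ℕ} (L : Set (Fin n → ℝ)) (δ : Fin n → ℝ) : Prop :=
  δ ∈ L ∧ (2 : ℝ)⁻¹ • δ ∉ L ∧ (2 : ℝ)⁻¹ • δ ∉ shadow L ∧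
    ∃ k : ℤ, dot δ δ = 4 * (k : ℝ)

/-- Inner product of codewords, valued in `ℤ/k`. -/
def codeDot {n k : ℕ} (c c' : Fin n → ZMod k) : ZMod k := ∑ i, c i * c' i

/-- The dual code. -/
def dualCode {n k : ℕ} (C : Set (Fin n → ZMod k)) : Set (Fin n → ZMod k) :=
  {x | ∀ c ∈ C, codeDot c x = 0}

/-- Hamming weight of a binary codeword. -/
def wt {n : ℕ} (c : Fin n → ZMod 2) : ℕ :=
  (Finset.univ.filter fun i => c i = 1).card

/-- A singly-even self-dual binary code: self-dual, with some codeword of weight `≢ 0 (mod 4)`. -/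
def IsSinglyEvenSelfDual {n : ℕ} (C : Set (Fin n → ZMod 2)) : Prop :=
  C = dualCode C ∧ ∃ c ∈ C, ¬ (4 ∣ wt c)

/-- Lift of a binary codeword to `{0,1}ⁿ ⊆ ℝⁿ`. -/
def liftBin {n : ℕ} (c : Fin n → ZMod 2) : Fin n → ℝ := fun i => ((c i).val : ℝ)

/-- Construction A lattice of a binary code: `Λ(C) = {(c + 2m)/√2}`. -/
def constructionA {n : ℕ} (C : Set (Fin n → ZMod 2)) : Set (Fin n → ℝ) :=
  {x | ∃ c ∈ C, ∃ m : Fin n → ℤ,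
    x = fun i => (liftBin c i + 2 * (m i : ℝ)) / Real.sqrt 2}

/-- Construction A lattice of a `ℤ/k` code: `Λ(C) = {(c + km)/√k}`. -/
def constructionAZ {n : ℕ} (k : ℕ) (C : Set (Fin n → ZMod k)) : Set (Fin n → ℝ) :=
  {x | ∃ c ∈ C, ∃ m : Fin n → ℤ,
    x = fun i => (((c i).val : ℝ) + (k : ℝ) * (m i : ℝ)) / Real.sqrt k}

/-- The shift vector `δ = (1,…,1)/√2`. -/
noncomputable def deltaAll (n : ℕ) : Fin n → ℝ := fun _ => 1 / Real.sqrt 2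

/-- Theta function of a set of vectors, `Θ_L(q) = Σ_{λ∈L} q^{λ²/2}`. -/
noncomputable def thetaSet {n : ℕ} (L : Set (Fin n → ℝ)) (q : ℝ) : ℝ :=
  ∑' l : L, q ^ (dot (l : Fin n → ℝ) (l : Fin n → ℝ) / 2)

/-- Jacobi theta function `θ₂(q) = Σ_m q^{(m+1/2)²/2}`. -/
noncomputable def theta2 (q : ℝ) : ℝ := ∑' m : ℤ, q ^ (((m : ℝ) + 1 / 2) ^ 2 / 2)

/-- Jacobi theta function `θ₃(q) = Σ_m q^{m²/2}`. -/
noncomputable def theta3 (q : ℝ) : ℝ := ∑' m : ℤ, q ^ ((m : ℝ) ^ 2 / 2)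

/-- Jacobi theta function `θ₄(q) = Σ_m (−1)^m q^{m²/2}`. -/
noncomputable def theta4 (q : ℝ) : ℝ := ∑' m : ℤ, (-1 : ℝ) ^ m * q ^ ((m : ℝ) ^ 2 / 2)

/-- `ℤⁿ₊`: integer vectors with even coordinate sum. -/
def intEven (n : ℕ) : Set (Fin n → ℤ) := {m | Even (∑ i, m i)}

/-- `ℤⁿ₋`: integer vectors with odd coordinate sum. -/
def intOdd (n : ℕ) : Set (Fin n → ℤ) := {m | Odd (∑ i, m i)}

/-- The doubly-even subcode `C₀` of a binary code. -/
def doublyEvenSub {n : ℕ} (C : Set (Fin n → ZMod 2)) : Set (Fin n → ZMod 2) :=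
  {c | c ∈ C ∧ wt c % 4 = 0}

/-- The code shadow `S(C) = C₀⊥ \ C`. -/
def codeShadow {n : ℕ} (C : Set (Fin n → ZMod 2)) : Set (Fin n → ZMod 2) :=
  dualCode (doublyEvenSub C) \ C

section Aux
variable {n : ℕ}

lemma dot_comm' (x y : Fin n → ℝ) : dot x y = dot y x := by
  unfold dot; exact Finset.sum_congr rfl fun i _ => mul_comm _ _

lemma dot_add_left' (x y z : Fin n → ℝ) : dot (x + y) z = dot x z + dot y z := by
  unfold dot
  rw [← Finset.sum_add_distrib]
  exact Finset.sum_congr rfl fun i _ => by simp [add_mul]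

lemma dot_sub_left' (x y z : Fin n → ℝ) : dot (x - y) z = dot x z - dot y z := by
  unfold dot
  rw [← Finset.sum_sub_distrib]
  exact Finset.sum_congr rfl fun i _ => by simp [sub_mul]

lemma dot_add_right' (x y z : Fin n → ℝ) : dot x (y + z) = dot x y + dot x z := by
  rw [dot_comm', dot_add_left', dot_comm' y x, dot_comm' z x]

lemma dot_sub_right' (x y z : Fin n → ℝ) : dot x (y - z) = dot x y - dot x z := by
  rw [dot_comm', dot_sub_left', dot_comm' y x, dot_comm' z x]

lemma dot_smul_right' (c : ℝ) (x y : Fin n → ℝ) : dot x (c • y) = c * dot x y := by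
  unfold dot
  rw [Finset.mul_sum]
  exact Finset.sum_congr rfl fun i _ => by simp [Pi.smul_apply]; ring

lemma dot_zero_right' (x : Fin n → ℝ) : dot x 0 = 0 := by simp [dot]

lemma int_parity (a : ℝ) (h : ∃ k : ℤ, a = (k : ℝ)) :
    (∃ k : ℤ, a = 2 * (k : ℝ)) ∨ (∃ k : ℤ, a = 2 * (k : ℝ) + 1) := by
  obtain ⟨k, rfl⟩ := h
  rcases Int.even_or_odd k with ⟨m, hm⟩ | ⟨m, hm⟩
  · exact Or.inl ⟨m, by rw [hm]; push_cast; ring⟩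
  · exact Or.inr ⟨m, by rw [hm]; push_cast; ring⟩

end Aux

/-- both orbifold lattices `Λ⁺` and `Λ⁻` are odd self-dual. -/
theorem orbifold_lattices_odd_selfDual {n : ℕ} (L : Set (Fin n → ℝ))
    (hL : IsOddSelfDual L) (δ : Fin n → ℝ) (hδ : GaugingCondition L δ) :
    IsOddSelfDual (orbPlus L δ) ∧ IsOddSelfDual (orbMinus L δ) := by
  obtain ⟨hLd, v, hvL, kv, hkv⟩ := hL
  obtain ⟨hδL, hhL, hhS, kδ, hkδ⟩ := hδ
  set h : Fin n → ℝ := (2 : ℝ)⁻¹ • δ with hhdef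
  have hdh : ∀ x : Fin n → ℝ, dot x h = dot δ x / 2 := by
    intro x
    rw [hhdef, dot_smul_right', dot_comm' x δ]
    ring
  have hdh' : ∀ x : Fin n → ℝ, dot h x = dot δ x / 2 := fun x => by
    rw [dot_comm']; exact hdh x
  have hhh : dot h h = (kδ : ℝ) := by
    rw [hdh' h, hdh δ, hkδ]; ring
  have hmemshift : ∀ (A : Set (Fin n → ℝ)) (x : Fin n → ℝ),
      x ∈ shiftSet A h ↔ ∃ a ∈ A, x = a + h := by
    intro A x
    constructor
    · rintro ⟨a, ha, rfl⟩; exact ⟨a, ha, rfl⟩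
    · rintro ⟨a, ha, rfl⟩; exact ⟨a, ha, rfl⟩
  have hint : ∀ a ∈ L, ∀ b ∈ L, ∃ k : ℤ, dot a b = (k : ℝ) := by
    intro a ha b hb
    rw [hLd] at hb
    exact hb a ha
  have hzero : (0 : Fin n → ℝ) ∈ L := by
    rw [hLd]
    intro l hl
    exact ⟨0, by rw [dot_zero_right']; norm_num⟩
  have hsub : ∀ a ∈ L, ∀ b ∈ L, a - b ∈ L := by
    intro a ha b hb
    rw [hLd]
    intro l hl
    obtain ⟨p, hp⟩ := hint l hl a ha
    obtain ⟨q, hq⟩ := hint l hl b hb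
    exact ⟨p - q, by rw [dot_sub_right', hp, hq]; push_cast; ring⟩
  have hadd : ∀ a ∈ L, ∀ b ∈ L, a + b ∈ L := by
    intro a ha b hb
    rw [hLd]
    intro l hl
    obtain ⟨p, hp⟩ := hint l hl a ha
    obtain ⟨q, hq⟩ := hint l hl b hb
    exact ⟨p + q, by rw [dot_add_right', hp, hq]; push_cast; ring⟩
  -- existence of a δ-odd vector μ
  have hμex : ∃ μ ∈ L, ∃ k : ℤ, dot δ μ = 2 * (k : ℝ) + 1 := by
    by_contra hcon
    push_neg at hcon
    apply hhL
    rw [hLd]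
    intro l hl
    rcases int_parity _ (hint δ hδL l hl) with ⟨m, hm⟩ | ⟨m, hm⟩
    · exact ⟨m, by rw [hdh l, hm]; ring⟩
    · exact absurd hm (hcon l hl m)
  obtain ⟨μ, hμL, pμ, hpμ⟩ := hμex
  -- shadow condition: even-norm δ-odd vector w
  have hwex : ∃ w ∈ L, (∃ k : ℤ, dot w w = 2 * (k : ℝ)) ∧ ∃ k : ℤ, dot δ w = 2 * (k : ℝ) + 1 := by
    have hnd : h ∉ dualSet (evenSub L) := fun hmem => hhS ⟨hmem, hhL⟩
    by_contra hcon
    push_neg at hcon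
    apply hnd
    intro l hl
    obtain ⟨hlL, he⟩ := hl
    rcases int_parity _ (hint δ hδL l hlL) with ⟨m, hm⟩ | ⟨m, hm⟩
    · exact ⟨m, by rw [hdh l, hm]; ring⟩
    · exact absurd hm (hcon l hlL he m)
  obtain ⟨w, hwL, ⟨cw, hcw⟩, qw, hqw⟩ := hwex
  -- an odd-norm vector in deltaEven
  have hu : ∃ u, u ∈ deltaEven L δ ∧ ∃ k : ℤ, dot u u = 2 * (k : ℝ) + 1 := by
    rcases int_parity _ (hint δ hδL v hvL) with ⟨m, hm⟩ | ⟨m, hm⟩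
    · exact ⟨v, ⟨hvL, m, hm⟩, kv, hkv⟩
    · obtain ⟨t, ht⟩ := hint v hvL w hwL
      refine ⟨v - w, ⟨hsub v hvL w hwL, m - qw, ?_⟩, kv - t + cw, ?_⟩
      · rw [dot_sub_right', hm, hqw]; push_cast; ring
      · have e1 : dot (v - w) (v - w) = dot v v - 2 * dot v w + dot w w := by
          rw [dot_sub_right', dot_sub_left', dot_sub_left', dot_comm' w v]; ring
        rw [e1, hkv, ht, hcw]; push_cast; ring
  obtain ⟨u, huE, ku, hku⟩ := hu
  -- dot μ x is a half-integer for any x dual to deltaEven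
  have hμx_half : ∀ x, x ∈ dualSet (deltaEven L δ) → ∃ m : ℤ, dot μ x = (m : ℝ) / 2 := by
    intro x hx
    have hμμ : μ + μ ∈ deltaEven L δ :=
      ⟨hadd μ hμL μ hμL, 2 * pμ + 1, by rw [dot_add_right', hpμ]; push_cast; ring⟩
    obtain ⟨m, hm⟩ := hx (μ + μ) hμμ
    refine ⟨m, ?_⟩
    have h2 : dot (μ + μ) x = 2 * dot μ x := by rw [dot_add_left']; ring
    rw [h2] at hm
    linarith
  -- the dual of deltaEven is L ∪ (L + h)
  have hdualLe : ∀ x, x ∈ dualSet (deltaEven L δ) → x ∈ L ∨ x - h ∈ L := by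
    intro x hx
    obtain ⟨m, hμx⟩ := hμx_half x hx
    rcases Int.even_or_odd m with ⟨p, hp⟩ | ⟨p, hp⟩
    · left
      rw [hLd]
      intro l hl
      rcases int_parity _ (hint δ hδL l hl) with ⟨a, ha⟩ | ⟨a, ha⟩
      · exact hx l ⟨hl, a, ha⟩
      · have hlm : l - μ ∈ deltaEven L δ :=
          ⟨hsub l hl μ hμL, a - pμ, by rw [dot_sub_right', ha, hpμ]; push_cast; ring⟩
        obtain ⟨b, hb⟩ := hx (l - μ) hlm
        refine ⟨b + p, ?_⟩
        have e : dot l x = dot (l - μ) x + dot μ x := by rw [dot_sub_left']; ring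
        rw [e, hb, hμx, hp]; push_cast; ring
    · right
      rw [hLd]
      intro l hl
      rcases int_parity _ (hint δ hδL l hl) with ⟨a, ha⟩ | ⟨a, ha⟩
      · obtain ⟨b, hb⟩ := hx l ⟨hl, a, ha⟩
        refine ⟨b - a, ?_⟩
        have e : dot l (x - h) = dot l x - dot δ l / 2 := by rw [dot_sub_right', hdh l]
        rw [e, hb, ha]; push_cast; ring
      · have hlm : l - μ ∈ deltaEven L δ :=
          ⟨hsub l hl μ hμL, a - pμ, by rw [dot_sub_right', ha, hpμ]; push_cast; ring⟩
        obtain ⟨b, hb⟩ := hx (l - μ) hlm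
        refine ⟨b + p - a, ?_⟩
        have e : dot l (x - h) = dot (l - μ) x + dot μ x - dot δ l / 2 := by
          rw [dot_sub_right', dot_sub_left', hdh l]; ring
        rw [e, hb, hμx, hp, ha]; push_cast; ring
  -- dot product computations with shifts
  have hshiftdot : ∀ a b : Fin n → ℝ,
      dot (a + h) (b + h) = dot a b + dot δ a / 2 + dot δ b / 2 + (kδ : ℝ) := by
    intro a b
    rw [dot_add_left', dot_add_right', dot_add_right', hdh a, hdh' b, hhh]
    ring
  have hdotshift : ∀ a b : Fin n → ℝ, dot a (b + h) = dot a b + dot δ a / 2 := by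
    intro a b; rw [dot_add_right', hdh a]
  have hdotshift' : ∀ a b : Fin n → ℝ, dot (a + h) b = dot a b + dot δ b / 2 := by
    intro a b; rw [dot_add_left', hdh' b]
  have hsub_add : ∀ x : Fin n → ℝ, x - h + h = x := by intro x; abel
  -- Λ⁺ is self-dual
  have hOP : orbPlus L δ = dualSet (orbPlus L δ) := by
    apply Set.Subset.antisymm
    · rintro x hx l hl
      rcases hx with ⟨hxL, b, hb⟩ | hx'
      · rcases hl with ⟨hlL, a, ha⟩ | hl'
        · exact hint l hlL x hxL
        · obtain ⟨a, ⟨haL, s, hs⟩, rfl⟩ := (hmemshift _ l).mp hl'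
          obtain ⟨t, ht⟩ := hint a haL x hxL
          exact ⟨t + b, by rw [hdotshift' a x, ht, hb]; push_cast; ring⟩
      · obtain ⟨b', ⟨hbL, s, hs⟩, rfl⟩ := (hmemshift _ x).mp hx'
        rcases hl with ⟨hlL, a, ha⟩ | hl'
        · obtain ⟨t, ht⟩ := hint l hlL b' hbL
          exact ⟨t + a, by rw [hdotshift l b', ht, ha]; push_cast; ring⟩
        · obtain ⟨a, ⟨haL, r, hr⟩, rfl⟩ := (hmemshift _ l).mp hl'
          obtain ⟨t, ht⟩ := hint a haL b' hbL
          exact ⟨t + r + s + kδ, by rw [hshiftdot a b', ht, hr, hs]; push_cast; ring⟩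
    · intro x hx
      have hxLe : x ∈ dualSet (deltaEven L δ) := fun l hl => hx l (Or.inl hl)
      have hhx : ∃ k : ℤ, dot h x = (k : ℝ) := by
        refine hx h (Or.inr ?_)
        exact (hmemshift _ h).mpr
          ⟨0, ⟨hzero, 0, by rw [dot_zero_right']; norm_num⟩, by rw [zero_add]⟩
      obtain ⟨m, hm⟩ := hhx
      rcases hdualLe x hxLe with hxL | hyL
      · left
        refine ⟨hxL, m, ?_⟩
        rw [hdh' x] at hm
        linarith
      · right
        refine (hmemshift _ x).mpr ⟨x - h, ⟨hyL, m - kδ, ?_⟩, (hsub_add x).symm⟩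
        have e : dot h x = dot δ (x - h) / 2 + (kδ : ℝ) := by
          have e2 : dot h x = dot h (x - h) + dot h h := by
            rw [← dot_add_right', hsub_add x]
          rw [e2, hdh' (x - h), hhh]
        rw [e] at hm
        push_cast
        linarith
  -- Λ⁻ is self-dual
  have hOM : orbMinus L δ = dualSet (orbMinus L δ) := by
    apply Set.Subset.antisymm
    · rintro x hx l hl
      rcases hx with ⟨hxL, b, hb⟩ | hx'
      · rcases hl with ⟨hlL, a, ha⟩ | hl'
        · exact hint l hlL x hxL
        · obtain ⟨a, ⟨haL, s, hs⟩, rfl⟩ := (hmemshift _ l).mp hl'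
          obtain ⟨t, ht⟩ := hint a haL x hxL
          exact ⟨t + b, by rw [hdotshift' a x, ht, hb]; push_cast; ring⟩
      · obtain ⟨b', ⟨hbL, s, hs⟩, rfl⟩ := (hmemshift _ x).mp hx'
        rcases hl with ⟨hlL, a, ha⟩ | hl'
        · obtain ⟨t, ht⟩ := hint l hlL b' hbL
          exact ⟨t + a, by rw [hdotshift l b', ht, ha]; push_cast; ring⟩
        · obtain ⟨a, ⟨haL, r, hr⟩, rfl⟩ := (hmemshift _ l).mp hl'
          obtain ⟨t, ht⟩ := hint a haL b' hbL
          exact ⟨t + r + s + 1 + kδ, by rw [hshiftdot a b', ht, hr, hs]; push_cast; ring⟩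
    · intro x hx
      have hxLe : x ∈ dualSet (deltaEven L δ) := fun l hl => hx l (Or.inl hl)
      have hμh : ∃ k : ℤ, dot (μ + h) x = (k : ℝ) := by
        refine hx (μ + h) (Or.inr ?_)
        exact (hmemshift _ (μ + h)).mpr ⟨μ, ⟨hμL, pμ, hpμ⟩, rfl⟩
      obtain ⟨m, hm⟩ := hμh
      rcases hdualLe x hxLe with hxL | hyL
      · left
        obtain ⟨t, ht⟩ := hint μ hμL x hxL
        refine ⟨hxL, m - t, ?_⟩
        rw [hdotshift' μ x, ht] at hm
        push_cast
        linarith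
      · right
        obtain ⟨t, ht⟩ := hint μ hμL (x - h) hyL
        refine (hmemshift _ x).mpr ⟨x - h, ⟨hyL, m - t - pμ - kδ - 1, ?_⟩, (hsub_add x).symm⟩
        have e : dot (μ + h) x = dot μ (x - h) + dot δ μ / 2 + dot δ (x - h) / 2 + (kδ : ℝ) := by
          rw [← hshiftdot μ (x - h), hsub_add x]
        rw [e, ht, hpμ] at hm
        push_cast
        linarith
  exact ⟨⟨hOP, u, Or.inl huE, ku, hku⟩, ⟨hOM, u, Or.inl huE, ku, hku⟩⟩

end PaperFormal
end

section
/- Let C ⊆ 𝔽₂ⁿ be a singly-even self-dual binary code, Λ(C) its Construction A lattice, and δ = (1,...,1)/√2. Then the theta functions of the shifted cosets satisfy Θ_{Λ_even + δ/2}(q) = Θ_{Λ_odd + δ/2}(q) = (θ₂(q)θ₃(q))^{n/2}/2, where Λ_even/odd = {λ ∈ Λ(C) : δ·λ even/odd}. -/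
open scoped BigOperators

namespace PaperFormal

/-!
Write `Λ(C) = {x/√2 : x ∈ ℤⁿ, x mod 2 ∈ C}`. For `λ = x/√2` one has `δ·λ = (Σᵢ xᵢ)/2` and
`(λ + δ/2)²/2 = Σᵢ (xᵢ/2 + 1/4)²`, so the two shifted cosets are indexed by the lifts `x` with
`Σᵢ xᵢ ≡ 0` resp. `≡ 2 (mod 4)`; self-orthogonality of `C` makes `Σᵢ xᵢ` even, so together they
exhaust `Λ(C) + δ/2`.

Writing `x = c + 2m`, the theta series of `Λ(C) + δ/2` factors as `|C| A(q)ⁿ` with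
`A(q) = Σₘ q^{(m+1/4)²} = Σₘ q^{(m+3/4)²}`. Since `|C| = 2^{n/2}` and `θ₂θ₃ = 2A²`, this is
`(θ₂θ₃)^{n/2}`. The two halves have equal theta series: if `s ∈ C` has weight `≡ 2 (mod 4)`,
the reflection `xᵢ ↦ -1 - xᵢ` on the support of `s` preserves `(xᵢ/2 + 1/4)²`, adds `s` to
`x mod 2`, and changes `Σᵢ xᵢ` by `-wt s - 2 Σ_{s_i = 1} xᵢ ≡ 2 (mod 4)`, because
`Σ_{s_i = 1} xᵢ ≡ s·x ≡ 0 (mod 2)`.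

All series are summed in `ℝ≥0∞`: `toReal` sends a divergent sum `∞` to `0`, the value of the
corresponding real `tsum`, so no convergence argument is needed.
-/

open scoped ENNReal

lemma tsum_eq_toReal_tsum_ofReal {ι : Type*} {f : ι → ℝ} (hf : ∀ i, 0 ≤ f i) :
    ∑' i, f i = (∑' i, ENNReal.ofReal (f i)).toReal := by
  rw [ENNReal.tsum_toReal_eq fun _ => ENNReal.ofReal_ne_top]
  exact tsum_congr fun i => (ENNReal.toReal_ofReal (hf i)).symm

lemma tsum_mul_tsum_eq_tsum_prod {α β : Type*} (f : α → ℝ≥0∞) (g : β → ℝ≥0∞) :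
    (∑' a, f a) * ∑' b, g b = ∑' p : α × β, f p.1 * g p.2 := by
  rw [ENNReal.tsum_prod', ← ENNReal.tsum_mul_right]
  exact tsum_congr fun a => ENNReal.tsum_mul_left.symm

lemma tsum_pi_prod_eq_prod_tsum {κ : Type*} :
    ∀ {n : ℕ} (g : Fin n → κ → ℝ≥0∞), ∑' m : Fin n → κ, ∏ i, g i (m i) = ∏ i, ∑' k, g i k
  | 0, _ => by simp
  | n + 1, g => by
    rw [← (Fin.consEquiv fun _ => κ).tsum_eq, Fin.prod_univ_succ, ← tsum_pi_prod_eq_prod_tsum,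
      tsum_mul_tsum_eq_tsum_prod]
    simp [Fin.prod_univ_succ]

/-- Every pair of integers is uniquely `(j + k, j - k)` or `(j + k + 1, j - k)`. -/
lemma tsum_int_prod_eq_add (f : ℤ × ℤ → ℝ≥0∞) :
    ∑' p, f p =
      ∑' p : ℤ × ℤ, f (p.1 + p.2, p.1 - p.2) + ∑' p : ℤ × ℤ, f (p.1 + p.2 + 1, p.1 - p.2) := by
  let φ : (ℤ × ℤ) ⊕ (ℤ × ℤ) → ℤ × ℤ :=
    Sum.elim (fun p => (p.1 + p.2, p.1 - p.2)) (fun p => (p.1 + p.2 + 1, p.1 - p.2))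
  have hφ : Function.Bijective φ := by
    refine ⟨?_, fun p => ?_⟩
    · rintro (⟨a, b⟩ | ⟨a, b⟩) (⟨c, d⟩ | ⟨c, d⟩) h <;>
        simp only [φ, Sum.elim_inl, Sum.elim_inr, Prod.mk.injEq] at h <;>
        first | omega | (congr 2 <;> omega)
    · rcases Int.even_or_odd (p.1 + p.2) with ⟨j, hj⟩ | ⟨j, hj⟩
      · exact ⟨.inl (j, j - p.2), Prod.ext (by simp [φ]; omega) (by simp [φ])⟩
      · exact ⟨.inr (j, j - p.2), Prod.ext (by simp [φ]; omega) (by simp [φ])⟩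
  rw [← (Equiv.ofBijective φ hφ).tsum_eq, Summable.tsum_sum ENNReal.summable ENNReal.summable]
  rfl

noncomputable def quarterTheta (q : ℝ) : ℝ≥0∞ :=
  ∑' m : ℤ, ENNReal.ofReal (q ^ (((m : ℝ) + 1 / 4) ^ 2))

lemma tsum_threeQuarter_eq_quarterTheta (q : ℝ) :
    ∑' m : ℤ, ENNReal.ofReal (q ^ (((m : ℝ) + 3 / 4) ^ 2)) = quarterTheta q := by
  rw [quarterTheta, ← (Equiv.subLeft (-1 : ℤ)).tsum_eq]
  refine tsum_congr fun m => ?_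
  simp only [Equiv.subLeft_apply]
  congr 2
  push_cast
  ring

lemma theta2_mul_theta3 {q : ℝ} (hq : 0 < q) :
    theta2 q * theta3 q = 2 * (quarterTheta q).toReal ^ 2 := by
  have hF : ∀ (a b : ℤ) (u v : ℝ), ((a : ℝ) + 1 / 2) ^ 2 / 2 + (b : ℝ) ^ 2 / 2 = u ^ 2 + v ^ 2 →
      ENNReal.ofReal (q ^ (((a : ℝ) + 1 / 2) ^ 2 / 2)) * ENNReal.ofReal (q ^ ((b : ℝ) ^ 2 / 2))
        = ENNReal.ofReal (q ^ (u ^ 2)) * ENNReal.ofReal (q ^ (v ^ 2)) := by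
    intro a b u v h
    rw [← ENNReal.ofReal_mul (by positivity), ← ENNReal.ofReal_mul (by positivity),
      ← Real.rpow_add hq, ← Real.rpow_add hq, h]
  have hprod : (∑' a : ℤ, ENNReal.ofReal (q ^ (((a : ℝ) + 1 / 2) ^ 2 / 2)))
      * ∑' b : ℤ, ENNReal.ofReal (q ^ ((b : ℝ) ^ 2 / 2)) = 2 * quarterTheta q ^ 2 := by
    rw [tsum_mul_tsum_eq_tsum_prod, tsum_int_prod_eq_add]
    -- `hF` applies with `u = (a + b)/2 + 1/4` and `v = (a - b)/2 + 1/4`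
    have heven : ∑' p : ℤ × ℤ, ENNReal.ofReal (q ^ ((((p.1 + p.2 : ℤ) : ℝ) + 1 / 2) ^ 2 / 2))
          * ENNReal.ofReal (q ^ (((p.1 - p.2 : ℤ) : ℝ) ^ 2 / 2))
        = quarterTheta q * quarterTheta q := by
      rw [quarterTheta, tsum_mul_tsum_eq_tsum_prod]
      exact tsum_congr fun p => hF _ _ _ _ (by push_cast; ring)
    have hodd : ∑' p : ℤ × ℤ, ENNReal.ofReal (q ^ ((((p.1 + p.2 + 1 : ℤ) : ℝ) + 1 / 2) ^ 2 / 2))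
          * ENNReal.ofReal (q ^ (((p.1 - p.2 : ℤ) : ℝ) ^ 2 / 2))
        = quarterTheta q * quarterTheta q := by
      rw [← tsum_threeQuarter_eq_quarterTheta, tsum_mul_tsum_eq_tsum_prod]
      exact tsum_congr fun p => hF _ _ _ _ (by push_cast; ring)
    rw [heven, hodd]
    ring
  rw [theta2, theta3, tsum_eq_toReal_tsum_ofReal fun _ => (Real.rpow_nonneg hq.le _),
    tsum_eq_toReal_tsum_ofReal fun _ => (Real.rpow_nonneg hq.le _), ← ENNReal.toReal_mul, hprod,
    ENNReal.toReal_mul, ENNReal.toReal_pow, ENNReal.toReal_ofNat]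

section Codes

variable {n : ℕ}

def dualCodeSubmodule {k : ℕ} (C : Set (Fin n → ZMod k)) : Submodule (ZMod k) (Fin n → ZMod k) where
  carrier := dualCode C
  add_mem' {x y} hx hy c hc := by
    have hx : c ⬝ᵥ x = 0 := hx c hc
    have hy : c ⬝ᵥ y = 0 := hy c hc
    change c ⬝ᵥ (x + y) = 0
    rw [dotProduct_add, hx, hy, add_zero]
  zero_mem' c _ := dotProduct_zero c
  smul_mem' r x hx c hc := by
    have hx : c ⬝ᵥ x = 0 := hx c hc
    change c ⬝ᵥ (r • x) = 0
    rw [dotProduct_smul, hx, smul_zero]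

lemma add_mem_of_eq_dualCode {k : ℕ} {C : Set (Fin n → ZMod k)} (hC : C = dualCode C)
    {c c' : Fin n → ZMod k} (hc : c ∈ C) (hc' : c' ∈ C) : c + c' ∈ C := by
  rw [hC] at hc hc' ⊢
  exact (dualCodeSubmodule C).add_mem hc hc'

theorem exists_eq_two_mul_and_natCard_eq_pow {p : ℕ} [Fact p.Prime] {C : Set (Fin n → ZMod p)}
    (hC : C = dualCode C) : ∃ d, n = 2 * d ∧ Nat.card C = p ^ d := by
  set W := dualCodeSubmodule C
  have hW : (W : Set (Fin n → ZMod p)) = C := hC.symm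
  let B : LinearMap.BilinForm (ZMod p) (Fin n → ZMod p) := dotProductBilin (ZMod p) (ZMod p)
  have horth : B.orthogonal W = W := by
    ext x
    rw [LinearMap.BilinForm.mem_orthogonal_iff]
    simp only [← SetLike.mem_coe, hW]
    conv_rhs => rw [hC]
    exact Iff.rfl
  have hker : LinearMap.ker B = ⊥ := by
    refine LinearMap.ker_eq_bot'.2 fun x hx => funext fun i => ?_
    simpa [B] using LinearMap.congr_fun hx (Pi.single i 1)
  have hrank := LinearMap.BilinForm.finrank_add_finrank_orthogonal' (B := B) W
  rw [horth, hker, inf_bot_eq, finrank_bot, add_zero, Module.finrank_fin_fun] at hrank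
  refine ⟨Module.finrank (ZMod p) W, by omega, ?_⟩
  rw [← hW, SetLike.coe_sort_coe, Module.natCard_eq_pow_finrank (K := ZMod p), Nat.card_zmod]

lemma codeDot_self_eq_sum (c : Fin n → ZMod 2) : codeDot c c = ∑ i, c i :=
  Finset.sum_congr rfl fun i _ => by generalize c i = b; fin_cases b <;> rfl

lemma natCast_wt (c : Fin n → ZMod 2) : (wt c : ZMod 2) = ∑ i, c i := by
  rw [wt, Finset.card_filter, Nat.cast_sum]
  exact Finset.sum_congr rfl fun i _ => by generalize c i = b; fin_cases b <;> rfl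

lemma two_dvd_wt {C : Set (Fin n → ZMod 2)} (hC : C ⊆ dualCode C) {c : Fin n → ZMod 2}
    (hc : c ∈ C) : 2 ∣ wt c := by
  rw [← ZMod.natCast_eq_zero_iff, natCast_wt, ← codeDot_self_eq_sum]
  exact hC hc c hc

end Codes

section Lattice

variable {n : ℕ}

def codeLift (C : Set (Fin n → ZMod 2)) : Set (Fin n → ℤ) := {x | (fun i => (x i : ZMod 2)) ∈ C}

def codeLiftMod4 (C : Set (Fin n → ZMod 2)) (r : ℤ) : Set (Fin n → ℤ) :=
  {x | x ∈ codeLift C ∧ (∑ i, x i) % 4 = r}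

def liftParam (C : Set (Fin n → ZMod 2)) : C × (Fin n → ℤ) → Fin n → ℤ :=
  fun p i => ((p.1 : Fin n → ZMod 2) i).val + 2 * p.2 i

lemma intCast_liftParam (C : Set (Fin n → ZMod 2)) (p : C × (Fin n → ℤ)) :
    (fun i => (liftParam C p i : ZMod 2)) = p.1 := by
  funext i
  simp [liftParam, show (2 : ZMod 2) = 0 from rfl]

lemma liftParam_injective (C : Set (Fin n → ZMod 2)) : Function.Injective (liftParam C) := by
  intro p p' h
  have hc : p.1 = p'.1 := Subtype.ext <| by rw [← intCast_liftParam C p, h, intCast_liftParam]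
  refine Prod.ext hc (funext fun i => ?_)
  have := congrFun h i
  simp only [liftParam, hc] at this
  omega

lemma range_liftParam (C : Set (Fin n → ZMod 2)) : Set.range (liftParam C) = codeLift C := by
  ext x
  constructor
  · rintro ⟨p, rfl⟩
    rw [codeLift, Set.mem_ofPred_eq, intCast_liftParam]
    exact p.1.2
  · intro hx
    refine ⟨(⟨_, hx⟩, fun i => x i / 2), funext fun i => ?_⟩
    simp only [liftParam, ZMod.val_intCast]
    omega

lemma constructionA_eq_image (C : Set (Fin n → ZMod 2)) :
    constructionA C = (fun x i => (x i : ℝ) / √2) '' codeLift C := by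
  rw [← range_liftParam, ← Set.range_comp]
  ext y
  simp only [constructionA, Set.mem_ofPred_eq, Set.mem_range, Function.comp_apply, liftParam,
    liftBin, Prod.exists, Subtype.exists, exists_prop]
  constructor
  · rintro ⟨c, hc, m, rfl⟩
    exact ⟨c, hc, m, by push_cast; rfl⟩
  · rintro ⟨c, hc, m, rfl⟩
    exact ⟨c, hc, m, by push_cast; rfl⟩

noncomputable def halfShift (x : Fin n → ℤ) : Fin n → ℝ := fun i => ((x i : ℝ) + 1 / 2) / √2

lemma halfShift_injective : Function.Injective (halfShift (n := n)) := by
  intro x y h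
  funext i
  have := congrFun h i
  simp only [halfShift, div_left_inj' (Real.sqrt_ne_zero'.2 two_pos), add_left_inj,
    Int.cast_inj] at this
  exact this

lemma dot_halfShift (x : Fin n → ℤ) :
    dot (halfShift x) (halfShift x) / 2 = ∑ i, ((x i : ℝ) / 2 + 1 / 4) ^ 2 := by
  rw [dot, Finset.sum_div]
  refine Finset.sum_congr rfl fun i _ => ?_
  rw [halfShift, div_mul_div_comm, Real.mul_self_sqrt zero_le_two]
  ring

lemma shiftSet_sep_constructionA (C : Set (Fin n → ZMod 2)) (P : ℝ → Prop) :
    shiftSet {l | l ∈ constructionA C ∧ P (dot (deltaAll n) l)} ((2 : ℝ)⁻¹ • deltaAll n)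
      = halfShift '' {x | x ∈ codeLift C ∧ P (((∑ i, x i : ℤ) : ℝ) / 2)} := by
  have hdot : ∀ x : Fin n → ℤ,
      dot (deltaAll n) (fun i => (x i : ℝ) / √2) = ((∑ i, x i : ℤ) : ℝ) / 2 := by
    intro x
    rw [dot, Int.cast_sum, Finset.sum_div]
    refine Finset.sum_congr rfl fun i _ => ?_
    rw [deltaAll, div_mul_div_comm, one_mul, Real.mul_self_sqrt zero_le_two]
  have hshift : ∀ x : Fin n → ℤ,
      (fun i => (x i : ℝ) / √2) + (2 : ℝ)⁻¹ • deltaAll n = halfShift x := by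
    intro x
    funext i
    simp only [Pi.add_apply, Pi.smul_apply, smul_eq_mul, deltaAll, halfShift]
    ring
  ext y
  simp only [shiftSet, constructionA_eq_image, Set.mem_image, Set.mem_ofPred_eq]
  constructor
  · rintro ⟨_, ⟨⟨x, hx, rfl⟩, hP⟩, rfl⟩
    exact ⟨x, ⟨hx, hdot x ▸ hP⟩, (hshift x).symm⟩
  · rintro ⟨x, ⟨hx, hP⟩, rfl⟩
    exact ⟨_, ⟨⟨x, hx, rfl⟩, (hdot x).symm ▸ hP⟩, hshift x⟩

lemma shiftSet_deltaEven_constructionA (C : Set (Fin n → ZMod 2)) :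
    shiftSet (deltaEven (constructionA C) (deltaAll n)) ((2 : ℝ)⁻¹ • deltaAll n)
      = halfShift '' codeLiftMod4 C 0 := by
  refine (shiftSet_sep_constructionA C fun t => ∃ k : ℤ, t = 2 * k).trans ?_
  congr 1
  ext x
  refine and_congr_right fun _ => ?_
  generalize ∑ i, x i = s
  constructor
  · rintro ⟨k, hk⟩
    have : (s : ℝ) = ((4 * k : ℤ) : ℝ) := by push_cast; linarith
    have := Int.cast_injective this
    omega
  · intro h
    obtain ⟨k, rfl⟩ : ∃ k, s = 4 * k := ⟨s / 4, by omega⟩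
    exact ⟨k, by push_cast; ring⟩

lemma shiftSet_deltaOdd_constructionA (C : Set (Fin n → ZMod 2)) :
    shiftSet (deltaOdd (constructionA C) (deltaAll n)) ((2 : ℝ)⁻¹ • deltaAll n)
      = halfShift '' codeLiftMod4 C 2 := by
  refine (shiftSet_sep_constructionA C fun t => ∃ k : ℤ, t = 2 * k + 1).trans ?_
  congr 1
  ext x
  refine and_congr_right fun _ => ?_
  generalize ∑ i, x i = s
  constructor
  · rintro ⟨k, hk⟩
    have : (s : ℝ) = ((4 * k + 2 : ℤ) : ℝ) := by push_cast; linarith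
    have := Int.cast_injective this
    omega
  · intro h
    obtain ⟨k, rfl⟩ : ∃ k, s = 4 * k + 2 := ⟨s / 4, by omega⟩
    exact ⟨k, by push_cast; ring⟩

end Lattice

section Theta

variable {n : ℕ}

noncomputable def shiftedWeight (q : ℝ) (x : Fin n → ℤ) : ℝ≥0∞ :=
  ∏ i, ENNReal.ofReal (q ^ (((x i : ℝ) / 2 + 1 / 4) ^ 2))

lemma thetaSet_image_halfShift {q : ℝ} (hq : 0 < q) (Y : Set (Fin n → ℤ)) :
    thetaSet (halfShift '' Y) q = (∑' x : Y, shiftedWeight q (x : Fin n → ℤ)).toReal := by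
  rw [thetaSet, tsum_image (fun l => q ^ (dot l l / 2)) halfShift_injective.injOn,
    tsum_eq_toReal_tsum_ofReal fun _ => Real.rpow_nonneg hq.le _]
  congr 1
  refine tsum_congr fun x => ?_
  rw [dot_halfShift, Real.rpow_sum_of_pos hq,
    ENNReal.ofReal_prod_of_nonneg fun i _ => Real.rpow_nonneg hq.le _]
  rfl

lemma tsum_shiftedWeight_codeLift (q : ℝ) (C : Set (Fin n → ZMod 2)) :
    ∑' x : codeLift C, shiftedWeight q (x : Fin n → ℤ) = Nat.card C * quarterTheta q ^ n := by
  have hcoord : ∀ b : ZMod 2,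
      ∑' k : ℤ, ENNReal.ofReal (q ^ (((((b.val : ℤ) + 2 * k : ℤ) : ℝ) / 2 + 1 / 4) ^ 2))
        = quarterTheta q := by
    intro b
    obtain rfl | rfl : b = 0 ∨ b = 1 := by revert b; decide
    · refine tsum_congr fun k => ?_
      congr 3
      push_cast
      simp only [ZMod.val_zero, CharP.cast_eq_zero]
      ring
    · rw [← tsum_threeQuarter_eq_quarterTheta]
      refine tsum_congr fun k => ?_
      congr 3
      push_cast
      simp only [ZMod.val_one, Nat.cast_one]
      ring
  have hinner : ∀ c : C,
      ∑' m : Fin n → ℤ, shiftedWeight q (liftParam C (c, m)) = quarterTheta q ^ n := by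
    intro c
    simp only [shiftedWeight, liftParam]
    refine (tsum_pi_prod_eq_prod_tsum fun i k => ENNReal.ofReal
      (q ^ ((((((c : Fin n → ZMod 2) i).val + 2 * k : ℤ) : ℝ) / 2 + 1 / 4) ^ 2))).trans ?_
    simp only [hcoord, Finset.prod_const, Finset.card_univ, Fintype.card_fin]
  rw [← range_liftParam, tsum_range _ (liftParam_injective C), ENNReal.tsum_prod',
    tsum_congr hinner, ENNReal.tsum_const, ENat.card_eq_coe_natCard]
  rfl

end Theta

section Flip

variable {n : ℕ} {C : Set (Fin n → ZMod 2)}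

def flipOn (s : Fin n → ZMod 2) (x : Fin n → ℤ) : Fin n → ℤ :=
  fun i => if s i = 1 then -1 - x i else x i

lemma flipOn_involutive (s : Fin n → ZMod 2) : Function.Involutive (flipOn s) := by
  intro x
  funext i
  by_cases h : s i = 1 <;> simp [flipOn, h]

lemma shiftedWeight_flipOn (q : ℝ) (s : Fin n → ZMod 2) (x : Fin n → ℤ) :
    shiftedWeight q (flipOn s x) = shiftedWeight q x := by
  refine Finset.prod_congr rfl fun i _ => ?_
  by_cases h : s i = 1
  · simp only [flipOn, h, if_true]
    push_cast
    ring_nf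
  · simp only [flipOn, h, if_false]

lemma intCast_flipOn (s : Fin n → ZMod 2) (x : Fin n → ℤ) :
    (fun i => (flipOn s x i : ZMod 2)) = (fun i => (x i : ZMod 2)) + s := by
  funext i
  obtain h | h : s i = 0 ∨ s i = 1 := by generalize s i = b; revert b; decide
  · simp [flipOn, h]
  · simp only [flipOn, h, if_true, Pi.add_apply, Int.cast_sub, Int.cast_neg, Int.cast_one]
    generalize (x i : ZMod 2) = b
    revert b
    decide

lemma flipOn_mem_codeLift_iff (hC : C = dualCode C) {s : Fin n → ZMod 2} (hs : s ∈ C)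
    {x : Fin n → ℤ} : flipOn s x ∈ codeLift C ↔ x ∈ codeLift C := by
  simp only [codeLift, Set.mem_ofPred_eq, intCast_flipOn]
  refine ⟨fun h => ?_, fun h => add_mem_of_eq_dualCode hC h hs⟩
  simpa [add_assoc, ZModModule.add_self] using add_mem_of_eq_dualCode hC h hs

lemma sum_flipOn (s : Fin n → ZMod 2) (x : Fin n → ℤ) :
    ∑ i, flipOn s x i = ∑ i, x i - wt s - 2 * ∑ i with s i = 1, x i := by
  have : ∀ i, flipOn s x i = x i - if s i = 1 then 2 * x i + 1 else 0 := by
    intro i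
    unfold flipOn
    split_ifs <;> ring
  rw [Finset.sum_congr rfl fun i _ => this i, Finset.sum_sub_distrib, ← Finset.sum_filter,
    Finset.sum_add_distrib, ← Finset.mul_sum, wt]
  simp
  ring

lemma intCast_sum_filter_eq_codeDot (s : Fin n → ZMod 2) (x : Fin n → ℤ) :
    ((∑ i with s i = 1, x i : ℤ) : ZMod 2) = codeDot s (fun i => (x i : ZMod 2)) := by
  rw [Finset.sum_filter, Int.cast_sum, codeDot]
  refine Finset.sum_congr rfl fun i _ => ?_
  obtain h | h : s i = 0 ∨ s i = 1 := by generalize s i = b; revert b; decide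
  all_goals simp [h]

lemma two_dvd_sum_filter (hC : C ⊆ dualCode C) {s : Fin n → ZMod 2} (hs : s ∈ C)
    {x : Fin n → ℤ} (hx : x ∈ codeLift C) : 2 ∣ ∑ i with s i = 1, x i := by
  have h := (ZMod.intCast_zmod_eq_zero_iff_dvd (∑ i with s i = 1, x i) 2).1 <| by
    rw [intCast_sum_filter_eq_codeDot]
    exact hC hx s hs
  exact_mod_cast h

lemma two_dvd_sum_of_mem_codeLift (hC : C ⊆ dualCode C) {x : Fin n → ℤ} (hx : x ∈ codeLift C) :
    2 ∣ ∑ i, x i := by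
  have h := (ZMod.intCast_zmod_eq_zero_iff_dvd (∑ i, x i) 2).1 <| by
    rw [Int.cast_sum, ← codeDot_self_eq_sum]
    exact hC hx _ hx
  exact_mod_cast h

lemma image_flipOn_codeLiftMod4 (hC : C = dualCode C) {s : Fin n → ZMod 2} (hs : s ∈ C)
    (hwt : wt s % 4 = 2) : flipOn s '' codeLiftMod4 C 0 = codeLiftMod4 C 2 := by
  rw [Set.image_eq_preimage_of_inverse (flipOn_involutive s) (flipOn_involutive s)]
  ext x
  simp only [codeLiftMod4, Set.mem_preimage, Set.mem_ofPred_eq, flipOn_mem_codeLift_iff hC hs]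
  refine and_congr_right fun hx => ?_
  obtain ⟨t, ht⟩ := two_dvd_sum_filter hC.subset hs hx
  rw [sum_flipOn, ht]
  omega

end Flip

section Sums

variable {n : ℕ} {C : Set (Fin n → ZMod 2)}

lemma tsum_shiftedWeight_codeLiftMod4_add (q : ℝ) (hC : C ⊆ dualCode C) :
    ∑' x : codeLiftMod4 C 0, shiftedWeight q (x : Fin n → ℤ)
      + ∑' x : codeLiftMod4 C 2, shiftedWeight q (x : Fin n → ℤ)
      = Nat.card C * quarterTheta q ^ n := by
  have hunion : codeLiftMod4 C 0 ∪ codeLiftMod4 C 2 = codeLift C := by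
    ext x
    simp only [codeLiftMod4, Set.mem_union, Set.mem_ofPred_eq]
    refine ⟨fun h => h.elim And.left And.left, fun hx => ?_⟩
    have := two_dvd_sum_of_mem_codeLift hC hx
    exact (by omega : (∑ i, x i) % 4 = 0 ∨ (∑ i, x i) % 4 = 2).imp (⟨hx, ·⟩) (⟨hx, ·⟩)
  have hdisj : Disjoint (codeLiftMod4 C 0) (codeLiftMod4 C 2) :=
    Set.disjoint_left.2 fun x h0 h2 => by
      simp only [codeLiftMod4, Set.mem_ofPred_eq] at h0 h2
      omega
  rw [← Summable.tsum_union_disjoint (f := shiftedWeight q) hdisj ENNReal.summable ENNReal.summable,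
    hunion, tsum_shiftedWeight_codeLift]

lemma tsum_shiftedWeight_codeLiftMod4_zero_eq_two (q : ℝ) (hC : C = dualCode C)
    {s : Fin n → ZMod 2} (hs : s ∈ C) (hwt : wt s % 4 = 2) :
    ∑' x : codeLiftMod4 C 0, shiftedWeight q (x : Fin n → ℤ)
      = ∑' x : codeLiftMod4 C 2, shiftedWeight q (x : Fin n → ℤ) := by
  rw [← image_flipOn_codeLiftMod4 hC hs hwt, tsum_image _ (flipOn_involutive s).injective.injOn]
  simp only [shiftedWeight_flipOn]

end Sums

theorem theta_shifted_cosets_general {n : ℕ} (C : Set (Fin n → ZMod 2))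
    (hC : IsSinglyEvenSelfDual C) (q : ℝ) (hq0 : 0 < q) :
    thetaSet (shiftSet (deltaEven (constructionA C) (deltaAll n)) ((2 : ℝ)⁻¹ • deltaAll n)) q
      = (theta2 q * theta3 q) ^ ((n : ℝ) / 2) / 2 ∧
    thetaSet (shiftSet (deltaOdd (constructionA C) (deltaAll n)) ((2 : ℝ)⁻¹ • deltaAll n)) q
      = (theta2 q * theta3 q) ^ ((n : ℝ) / 2) / 2 := by
  obtain ⟨hdual, s, hs, hwt⟩ := hC
  have hwt2 : wt s % 4 = 2 := by
    have := two_dvd_wt hdual.subset hs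
    omega
  obtain ⟨d, hn, hcard⟩ := exists_eq_two_mul_and_natCard_eq_pow hdual
  have hflip := tsum_shiftedWeight_codeLiftMod4_zero_eq_two q hdual hs hwt2
  have htotal := tsum_shiftedWeight_codeLiftMod4_add q hdual.subset
  rw [← hflip, ← two_mul, hcard] at htotal
  have hhalf : (∑' x : codeLiftMod4 C 0, shiftedWeight q (x : Fin n → ℤ)).toReal
      = 2 ^ d * (quarterTheta q).toReal ^ n / 2 := by
    have := congrArg ENNReal.toReal htotal
    simp only [ENNReal.toReal_mul, ENNReal.toReal_pow, ENNReal.toReal_ofNat,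
      ENNReal.toReal_natCast] at this
    push_cast at this
    linarith
  have hpow : (theta2 q * theta3 q) ^ ((n : ℝ) / 2) = 2 ^ d * (quarterTheta q).toReal ^ n := by
    rw [theta2_mul_theta3 hq0, hn, Nat.cast_mul, Nat.cast_two, mul_div_cancel_left₀ _ two_ne_zero,
      Real.rpow_natCast, mul_pow, pow_mul]
  rw [shiftSet_deltaEven_constructionA, shiftSet_deltaOdd_constructionA,
    thetaSet_image_halfShift hq0, thetaSet_image_halfShift hq0, ← hflip, hhalf, hpow]
  exact ⟨rfl, rfl⟩

/-- theta functions of the shifted cosets `Λ_even + δ/2` and `Λ_odd + δ/2`. -/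
theorem theta_shifted_cosets {n : ℕ} (C : Set (Fin n → ZMod 2))
    (hC : IsSinglyEvenSelfDual C) (q : ℝ) (hq0 : 0 < q) (hq1 : q < 1) :
    thetaSet (shiftSet (deltaEven (constructionA C) (deltaAll n)) ((2 : ℝ)⁻¹ • deltaAll n)) q
      = (theta2 q * theta3 q) ^ ((n : ℝ) / 2) / 2 ∧
    thetaSet (shiftSet (deltaOdd (constructionA C) (deltaAll n)) ((2 : ℝ)⁻¹ • deltaAll n)) q
      = (theta2 q * theta3 q) ^ ((n : ℝ) / 2) / 2 :=
  theta_shifted_cosets_general C hC q hq0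

end PaperFormal
end

section
/- Let C ⊆ 𝔽₂ⁿ be a singly-even self-dual binary code and δ = (1,...,1)/√2. The two orbifold lattices Λ⁺ = Λ_even ∪ (Λ_even + δ/2) and Λ⁻ = Λ_even ∪ (Λ_odd + δ/2) are isomorphic as lattices: there is an orthogonal transformation of ℝⁿ (a reflection of coordinates determined by a fixed singly-even codeword t ∈ C) mapping Λ⁺ onto Λ⁻. -/
open scoped BigOperators

namespace PaperFormal

/- The reflection `R_t` in the coordinates of `supp t` preserves `Λ(C)`, and since
`δ·x - δ·R_t x = 2 (t/√2)·x` with `(t/√2)·x ∈ ℤ`, it preserves `Λ_even`. It sends `δ/2` to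
`δ/2 - t/√2`, and `δ·(t/√2) = wt t / 2` is odd, so `R_t (λ + δ/2) = (R_t λ - t/√2) + δ/2`
flips the `δ`-parity of the lattice part. As `R_t` is an involution, it exchanges
`Λ_even + δ/2` and `Λ_odd + δ/2`. -/

lemma _root_.Function.Involutive.image_eq_of_mapsTo {α : Type*} {f : α → α}
    (hf : Function.Involutive f) {A B : Set α} (hAB : Set.MapsTo f A B)
    (hBA : Set.MapsTo f B A) : f '' A = B :=
  hAB.image_subset.antisymm fun b hb => ⟨f b, hBA hb, hf b⟩

section Codes

variable {n k : ℕ}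

lemma codeDot_add_right (c x y : Fin n → ZMod k) :
    codeDot c (x + y) = codeDot c x + codeDot c y := by
  simp only [codeDot, Pi.add_apply, mul_add, Finset.sum_add_distrib]

lemma add_mem_dualCode {C : Set (Fin n → ZMod k)} {x y : Fin n → ZMod k}
    (hx : x ∈ dualCode C) (hy : y ∈ dualCode C) : x + y ∈ dualCode C := fun c hc => by
  rw [codeDot_add_right, hx c hc, hy c hc, add_zero]

lemma natCast_sum_val_mul_val (c d : Fin n → ZMod 2) :
    ((∑ i, (c i).val * (d i).val : ℕ) : ZMod 2) = codeDot c d := by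
  simp [codeDot]

lemma _root_.ZMod.val_add_two (a b : ZMod 2) :
    ((a + b).val : ℤ) = a.val + b.val - 2 * (a.val * b.val) := by
  decide +revert

lemma _root_.ZMod.val_two_eq_ite (a : ZMod 2) : (a.val : ℝ) = if a = 1 then 1 else 0 := by
  have h : a.val = if a = 1 then 1 else 0 := by decide +revert
  rw [h]
  split_ifs <;> simp

end Codes

section ConstructionA

variable {n : ℕ}

/-- `c/√2`, the vector of `Λ(C)` given by the codeword `c`. -/
noncomputable def codeVec (c : Fin n → ZMod 2) : Fin n → ℝ := fun i => liftBin c i / Real.sqrt 2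

def reflect (t : Fin n → ZMod 2) (x : Fin n → ℝ) : Fin n → ℝ :=
  fun i => if t i = 1 then -(x i) else x i

lemma dot_eq_dotProduct (x y : Fin n → ℝ) : dot x y = x ⬝ᵥ y := rfl

lemma codeVec_mem_constructionA {C : Set (Fin n → ZMod 2)} {c : Fin n → ZMod 2} (hc : c ∈ C) :
    codeVec c ∈ constructionA C :=
  ⟨c, hc, 0, by ext i; simp [codeVec]⟩

lemma neg_mem_constructionA {C : Set (Fin n → ZMod 2)} {x : Fin n → ℝ}
    (hx : x ∈ constructionA C) : -x ∈ constructionA C := by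
  obtain ⟨c, hc, m, rfl⟩ := hx
  refine ⟨c, hc, fun i => -m i - (c i).val, ?_⟩
  ext i
  simp only [Pi.neg_apply, liftBin]
  push_cast
  ring

lemma add_mem_constructionA {C : Set (Fin n → ZMod 2)} (hC : ∀ a ∈ C, ∀ b ∈ C, a + b ∈ C)
    {x y : Fin n → ℝ} (hx : x ∈ constructionA C) (hy : y ∈ constructionA C) :
    x + y ∈ constructionA C := by
  obtain ⟨c, hc, m, rfl⟩ := hx
  obtain ⟨d, hd, m', rfl⟩ := hy
  refine ⟨c + d, hC c hc d hd, fun i => m i + m' i + (c i).val * (d i).val, ?_⟩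
  ext i
  have hval : ((c i + d i).val : ℝ) = (c i).val + (d i).val - 2 * ((c i).val * (d i).val) := by
    exact_mod_cast ZMod.val_add_two (c i) (d i)
  simp only [Pi.add_apply, liftBin, hval]
  push_cast
  ring

lemma reflect_mem_constructionA {C : Set (Fin n → ZMod 2)} (t : Fin n → ZMod 2)
    {x : Fin n → ℝ} (hx : x ∈ constructionA C) : reflect t x ∈ constructionA C := by
  obtain ⟨c, hc, m, rfl⟩ := hx
  refine ⟨c, hc, fun i => if t i = 1 then -m i - (c i).val else m i, ?_⟩
  ext i
  simp only [reflect, liftBin]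
  split_ifs
  · push_cast
    ring
  · rfl

lemma exists_int_dot_codeVec {C : Set (Fin n → ZMod 2)} {t : Fin n → ZMod 2}
    (ht : t ∈ dualCode C) {x : Fin n → ℝ} (hx : x ∈ constructionA C) :
    ∃ k : ℤ, dot (codeVec t) x = k := by
  obtain ⟨c, hc, m, rfl⟩ := hx
  obtain ⟨j, hj⟩ : Even (∑ i, (c i).val * (t i).val) := by
    rw [← ZMod.natCast_eq_zero_iff_even, natCast_sum_val_mul_val]
    exact ht c hc
  refine ⟨j + ∑ i, (t i).val * m i, ?_⟩
  have hjR : (∑ i, ((c i).val : ℝ) * (t i).val) = j + j := by exact_mod_cast hj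
  have hterm : ∀ i, codeVec t i * ((liftBin c i + 2 * (m i : ℝ)) / Real.sqrt 2)
      = ((c i).val * (t i).val) / 2 + (t i).val * m i := by
    intro i
    simp only [codeVec, liftBin]
    field_simp
    rw [Real.sq_sqrt zero_le_two]
  simp only [dot, hterm, Finset.sum_add_distrib, ← Finset.sum_div, hjR]
  push_cast
  ring

end ConstructionA

section Reflection

variable {n : ℕ}

lemma reflect_involutive (t : Fin n → ZMod 2) : Function.Involutive (reflect t) := by
  intro x
  ext i
  simp only [reflect]
  split_ifs <;> simp

lemma reflect_add (t : Fin n → ZMod 2) (x y : Fin n → ℝ) :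
    reflect t (x + y) = reflect t x + reflect t y := by
  ext i
  simp only [reflect, Pi.add_apply]
  split_ifs <;> ring

lemma reflect_half_deltaAll (t : Fin n → ZMod 2) :
    reflect t ((2 : ℝ)⁻¹ • deltaAll n) = (2 : ℝ)⁻¹ • deltaAll n - codeVec t := by
  ext i
  simp only [reflect, codeVec, liftBin, deltaAll, Pi.smul_apply, Pi.sub_apply, smul_eq_mul,
    ZMod.val_two_eq_ite]
  split_ifs <;> ring

lemma reflect_add_half_deltaAll (t : Fin n → ZMod 2) (x : Fin n → ℝ) :
    reflect t (x + (2 : ℝ)⁻¹ • deltaAll n)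
      = (reflect t x - codeVec t) + (2 : ℝ)⁻¹ • deltaAll n := by
  rw [reflect_add, reflect_half_deltaAll]
  abel

lemma dot_deltaAll_reflect (t : Fin n → ZMod 2) (x : Fin n → ℝ) :
    dot (deltaAll n) (reflect t x) = dot (deltaAll n) x - 2 * dot (codeVec t) x := by
  simp only [dot, Finset.mul_sum, ← Finset.sum_sub_distrib]
  refine Finset.sum_congr rfl fun i _ => ?_
  simp only [reflect, codeVec, liftBin, deltaAll, ZMod.val_two_eq_ite]
  split_ifs <;> ring

lemma sum_val_eq_wt (c : Fin n → ZMod 2) : (∑ i, ((c i).val : ℝ)) = wt c := by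
  simp only [ZMod.val_two_eq_ite, wt, Finset.card_filter]
  push_cast
  rfl

lemma dot_deltaAll_codeVec (t : Fin n → ZMod 2) : dot (deltaAll n) (codeVec t) = wt t / 2 := by
  have hterm : ∀ i, deltaAll n i * codeVec t i = ((t i).val : ℝ) / 2 := fun i => by
    simp only [deltaAll, codeVec, liftBin]
    field_simp
    rw [Real.sq_sqrt zero_le_two, mul_comm]
  simp only [dot, hterm, ← Finset.sum_div, sum_val_eq_wt]

end Reflection

section Orbifold

variable {n : ℕ} {C : Set (Fin n → ZMod 2)} {t : Fin n → ZMod 2}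

lemma mapsTo_reflect_deltaEven (ht : t ∈ dualCode C) :
    Set.MapsTo (reflect t) (deltaEven (constructionA C) (deltaAll n))
      (deltaEven (constructionA C) (deltaAll n)) := by
  rintro x ⟨hx, k, hk⟩
  obtain ⟨j, hj⟩ := exists_int_dot_codeVec ht hx
  refine ⟨reflect_mem_constructionA t hx, k - j, ?_⟩
  rw [dot_deltaAll_reflect, hk, hj]
  push_cast
  ring

lemma exists_dot_deltaAll_reflect_sub_codeVec (ht : t ∈ dualCode C) (ht2 : wt t % 4 = 2)
    {x : Fin n → ℝ} (hx : x ∈ constructionA C) :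
    ∃ j : ℤ, dot (deltaAll n) (reflect t x - codeVec t) = dot (deltaAll n) x + 2 * j + 1 := by
  obtain ⟨k, hk⟩ := exists_int_dot_codeVec ht hx
  obtain ⟨s, hs⟩ : ∃ s, wt t = 4 * s + 2 := ⟨wt t / 4, by omega⟩
  refine ⟨-k - s - 1, ?_⟩
  rw [dot_eq_dotProduct, dotProduct_sub, ← dot_eq_dotProduct, ← dot_eq_dotProduct,
    dot_deltaAll_reflect, dot_deltaAll_codeVec, hk, hs]
  push_cast
  ring

lemma reflect_sub_codeVec_mem_constructionA (hC : C = dualCode C) (ht : t ∈ C)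
    {x : Fin n → ℝ} (hx : x ∈ constructionA C) : reflect t x - codeVec t ∈ constructionA C := by
  have hadd : ∀ a ∈ C, ∀ b ∈ C, a + b ∈ C := by
    rw [hC]
    exact fun a ha b hb => add_mem_dualCode ha hb
  rw [sub_eq_add_neg]
  exact add_mem_constructionA hadd (reflect_mem_constructionA t hx)
    (neg_mem_constructionA (codeVec_mem_constructionA ht))

lemma mapsTo_reflect_shift {A B : Set (Fin n → ℝ)}
    (hAB : Set.MapsTo (fun x => reflect t x - codeVec t) A B) :
    Set.MapsTo (reflect t) (shiftSet A ((2 : ℝ)⁻¹ • deltaAll n))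
      (shiftSet B ((2 : ℝ)⁻¹ • deltaAll n)) := by
  rintro _ ⟨x, hx, rfl⟩
  exact ⟨_, hAB hx, (reflect_add_half_deltaAll t x).symm⟩

lemma mapsTo_reflect_shift_deltaEven (hC : C = dualCode C) (ht : t ∈ C) (ht2 : wt t % 4 = 2) :
    Set.MapsTo (reflect t)
      (shiftSet (deltaEven (constructionA C) (deltaAll n)) ((2 : ℝ)⁻¹ • deltaAll n))
      (shiftSet (deltaOdd (constructionA C) (deltaAll n)) ((2 : ℝ)⁻¹ • deltaAll n)) := by
  refine mapsTo_reflect_shift fun x ⟨hx, k, hk⟩ =>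
    ⟨reflect_sub_codeVec_mem_constructionA hC ht hx, ?_⟩
  obtain ⟨j, hj⟩ := exists_dot_deltaAll_reflect_sub_codeVec (hC ▸ ht) ht2 hx
  exact ⟨k + j, by rw [hj, hk]; push_cast; ring⟩

lemma mapsTo_reflect_shift_deltaOdd (hC : C = dualCode C) (ht : t ∈ C) (ht2 : wt t % 4 = 2) :
    Set.MapsTo (reflect t)
      (shiftSet (deltaOdd (constructionA C) (deltaAll n)) ((2 : ℝ)⁻¹ • deltaAll n))
      (shiftSet (deltaEven (constructionA C) (deltaAll n)) ((2 : ℝ)⁻¹ • deltaAll n)) := by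
  refine mapsTo_reflect_shift fun x ⟨hx, k, hk⟩ =>
    ⟨reflect_sub_codeVec_mem_constructionA hC ht hx, ?_⟩
  obtain ⟨j, hj⟩ := exists_dot_deltaAll_reflect_sub_codeVec (hC ▸ ht) ht2 hx
  exact ⟨k + j + 1, by rw [hj, hk]; push_cast; ring⟩

end Orbifold

/-- the coordinate reflection determined by a singly-even codeword `t ∈ C`
maps `Λ⁺` onto `Λ⁻`. -/
theorem orbPlus_isometric_orbMinus {n : ℕ} (C : Set (Fin n → ZMod 2))
    (hC : IsSinglyEvenSelfDual C) (t : Fin n → ZMod 2) (ht : t ∈ C)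
    (ht2 : wt t % 4 = 2) :
    (fun x : Fin n → ℝ => fun i => if t i = 1 then -(x i) else x i) ''
        orbPlus (constructionA C) (deltaAll n)
      = orbMinus (constructionA C) (deltaAll n) := by
  obtain ⟨hCdual, -⟩ := hC
  have htdual : t ∈ dualCode C := hCdual ▸ ht
  have hinv := reflect_involutive t
  change reflect t '' _ = _
  rw [orbPlus, orbMinus, Set.image_union,
    hinv.image_eq_of_mapsTo (mapsTo_reflect_deltaEven htdual) (mapsTo_reflect_deltaEven htdual),
    hinv.image_eq_of_mapsTo (mapsTo_reflect_shift_deltaEven hCdual ht ht2)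
      (mapsTo_reflect_shift_deltaOdd hCdual ht ht2)]

end PaperFormal
end

section
/- Let K ⊆ 𝔽₂ⁿ be any subset of binary vectors not containing the all-zeros vector. Then Σ_{c∈K} Σ_{m∈ℤⁿ₊} q^{(m+c/2)²} = Σ_{c∈K} Σ_{m∈ℤⁿ₋} q^{(m+c/2)²}, where ℤⁿ₊ = {m ∈ ℤⁿ : Σmᵢ even} and ℤⁿ₋ = {m ∈ ℤⁿ : Σmᵢ odd}. -/
open scoped BigOperators

namespace PaperFormal

/-- Flip the `i₀` coordinate: `m i₀ ↦ -m i₀ - 1`. -/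
def flipAt {n : ℕ} (i₀ : Fin n) (m : Fin n → ℤ) : Fin n → ℤ :=
  Function.update m i₀ (-(m i₀) - 1)

lemma flipAt_sum {n : ℕ} (i₀ : Fin n) (m : Fin n → ℤ) :
    ∑ i, flipAt i₀ m i = (∑ i, m i) - 2 * m i₀ - 1 := by
  have h1 : ∑ i, flipAt i₀ m i
      = (-(m i₀) - 1) + ∑ i ∈ Finset.univ.erase i₀, m i := by
    rw [flipAt, Finset.sum_update_of_mem (Finset.mem_univ i₀),
      Finset.sdiff_singleton_eq_erase]
  have h2 : ∑ i, m i = m i₀ + ∑ i ∈ Finset.univ.erase i₀, m i :=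
    (Finset.add_sum_erase _ _ (Finset.mem_univ i₀)).symm
  omega

lemma flipAt_flipAt {n : ℕ} (i₀ : Fin n) (m : Fin n → ℤ) :
    flipAt i₀ (flipAt i₀ m) = m := by
  funext i
  by_cases hi : i = i₀
  · subst hi; simp [flipAt]
  · simp [flipAt, Function.update_of_ne hi]

lemma flipAt_mem_intOdd {n : ℕ} (i₀ : Fin n) {m : Fin n → ℤ} (hm : m ∈ intEven n) :
    flipAt i₀ m ∈ intOdd n := by
  have := flipAt_sum i₀ m
  have hm' : Even (∑ i, m i) := hm
  rw [Int.even_iff] at hm'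
  show Odd _
  rw [Int.odd_iff]
  omega

lemma flipAt_mem_intEven {n : ℕ} (i₀ : Fin n) {m : Fin n → ℤ} (hm : m ∈ intOdd n) :
    flipAt i₀ m ∈ intEven n := by
  have := flipAt_sum i₀ m
  have hm' : Odd (∑ i, m i) := hm
  rw [Int.odd_iff] at hm'
  show Even _
  rw [Int.even_iff]
  omega

/-- The parity-flipping equivalence `ℤⁿ₊ ≃ ℤⁿ₋`. -/
def flipEquiv {n : ℕ} (i₀ : Fin n) : intEven n ≃ intOdd n where
  toFun m := ⟨flipAt i₀ (m : Fin n → ℤ), flipAt_mem_intOdd i₀ m.2⟩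
  invFun m := ⟨flipAt i₀ (m : Fin n → ℤ), flipAt_mem_intEven i₀ m.2⟩
  left_inv m := Subtype.ext (flipAt_flipAt i₀ m)
  right_inv m := Subtype.ext (flipAt_flipAt i₀ m)

lemma nsq_flip {n : ℕ} (c : Fin n → ZMod 2) (i₀ : Fin n) (h : c i₀ = 1)
    (m : Fin n → ℤ) :
    nsq (fun i => ((flipAt i₀ m i : ℤ) : ℝ) + liftBin c i / 2)
      = nsq (fun i => ((m i : ℤ) : ℝ) + liftBin c i / 2) := by
  unfold nsq dot
  refine Finset.sum_congr rfl fun i _ => ?_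
  by_cases hi : i = i₀
  · subst hi
    have hl : liftBin c i = 1 := by simp [liftBin, h, ZMod.val_one]
    simp only [flipAt, Function.update_self, hl]
    push_cast
    ring
  · simp [flipAt, Function.update_of_ne hi]

/-- for any set `K` of nonzero binary vectors, the theta sums over
`ℤⁿ₊` and `ℤⁿ₋` coincide. -/
theorem theta_sum_even_eq_odd {n : ℕ} (K : Set (Fin n → ZMod 2))
    (hK : (0 : Fin n → ZMod 2) ∉ K) (q : ℝ) (hq0 : 0 < q) (hq1 : q < 1) :
    (∑' c : K, ∑' m : intEven n,
        q ^ nsq (fun i => ((m : Fin n → ℤ) i : ℝ) + liftBin (c : Fin n → ZMod 2) i / 2))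
      = ∑' c : K, ∑' m : intOdd n,
        q ^ nsq (fun i => ((m : Fin n → ℤ) i : ℝ) + liftBin (c : Fin n → ZMod 2) i / 2) := by
  refine tsum_congr fun c => ?_
  obtain ⟨i₀, hi₀⟩ : ∃ i, (c : Fin n → ZMod 2) i ≠ 0 := by
    by_contra h
    push_neg at h
    have hc0 : (c : Fin n → ZMod 2) = 0 := funext h
    exact hK (hc0 ▸ c.2)
  have h1 : (c : Fin n → ZMod 2) i₀ = 1 := by
    have : ∀ x : ZMod 2, x ≠ 0 → x = 1 := by decide
    exact this _ hi₀
  rw [← Equiv.tsum_eq (flipEquiv i₀)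
    (fun m : intOdd n => q ^ nsq (fun i =>
      ((m : Fin n → ℤ) i : ℝ) + liftBin (c : Fin n → ZMod 2) i / 2))]
  exact tsum_congr fun m => by
    rw [show ((flipEquiv i₀ m : Fin n → ℤ)) = flipAt i₀ (m : Fin n → ℤ) from rfl,
      nsq_flip _ _ h1]

end PaperFormal
end

section
/- The ℤ/8-valued 't Hooft anomaly of the shift ℤ₂ symmetry of the lattice CFT on an odd self-dual lattice Λ with shift vector δ ∈ Λ, read off as the phase e^{2πiν/8} with which ST²S⁻¹ acts on the ratio (Σ_{λ∈Λ} (−1)^{λ·δ} q^{λ²/2})/(Σ_{λ∈Λ} q^{λ²/2}), equals ν = 2δ² mod 8. In particular the symmetry is non-anomalous iff δ² ∈ 4ℤ. Concretely: under τ ↦ τ+2 applied after S-transform, the function Σ_{λ∈Λ} e^{2πiτ(λ+δ/2)²/2 − 2πiτλ²/2} picks up the phase e^{2πi·2δ²/8}. -/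
open scoped BigOperators

namespace PaperFormal

private lemma nsq_add_half {n : ℕ} (x δ : Fin n → ℝ) :
    nsq (x + (2 : ℝ)⁻¹ • δ) = nsq x + dot δ x + nsq δ / 4 := by
  simp only [nsq, dot, Pi.add_apply, Pi.smul_apply, smul_eq_mul]
  have h : ∀ i, (x i + 2⁻¹ * δ i) * (x i + 2⁻¹ * δ i)
      = x i * x i + δ i * x i + (δ i * δ i) / 4 := fun i => by ring
  simp only [h, Finset.sum_add_distrib, ← Finset.sum_div]

/-- under `τ ↦ τ + 2`, the twisted theta sum picks up the anomaly phase
`e^{2πi·2δ²/8}`, which is trivial iff `δ² ∈ 4ℤ`. -/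
theorem shift_anomaly_phase {n : ℕ} (L : Set (Fin n → ℝ))
    (hL : IsOddSelfDual L) (δ : Fin n → ℝ) (hδ : δ ∈ L)
    (τ : ℂ) (hτ : 0 < τ.im) :
    (∑' l : L, Complex.exp (2 * (Real.pi : ℂ) * Complex.I * (τ + 2) *
        ((nsq ((l : Fin n → ℝ) + (2 : ℝ)⁻¹ • δ) : ℂ) / 2)))
      = Complex.exp (2 * (Real.pi : ℂ) * Complex.I * ((2 * (nsq δ : ℂ)) / 8)) *
        ∑' l : L, Complex.exp (2 * (Real.pi : ℂ) * Complex.I * τ *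
          ((nsq ((l : Fin n → ℝ) + (2 : ℝ)⁻¹ • δ) : ℂ) / 2)) ∧
    (Complex.exp (2 * (Real.pi : ℂ) * Complex.I * ((2 * (nsq δ : ℂ)) / 8)) = 1 ↔
      ∃ k : ℤ, nsq δ = 4 * (k : ℝ)) := by
  obtain ⟨hdual, -⟩ := hL
  constructor
  · have key : ∀ l : L,
        Complex.exp (2 * (Real.pi : ℂ) * Complex.I * (τ + 2) *
          ((nsq ((l : Fin n → ℝ) + (2 : ℝ)⁻¹ • δ) : ℂ) / 2))
        = Complex.exp (2 * (Real.pi : ℂ) * Complex.I * ((2 * (nsq δ : ℂ)) / 8)) *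
          Complex.exp (2 * (Real.pi : ℂ) * Complex.I * τ *
            ((nsq ((l : Fin n → ℝ) + (2 : ℝ)⁻¹ • δ) : ℂ) / 2)) := by
      intro l
      have hl : (l : Fin n → ℝ) ∈ dualSet L := hdual ▸ l.2
      obtain ⟨k1, hk1⟩ := hl (l : Fin n → ℝ) l.2
      obtain ⟨k2, hk2⟩ := hl δ hδ
      have hm : nsq ((l : Fin n → ℝ) + (2 : ℝ)⁻¹ • δ)
          = ((k1 + k2 : ℤ) : ℝ) + nsq δ / 4 := by
        rw [nsq_add_half]
        push_cast
        rw [nsq, hk1, hk2]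
      have hmC : (nsq ((l : Fin n → ℝ) + (2 : ℝ)⁻¹ • δ) : ℂ)
          = ((k1 + k2 : ℤ) : ℂ) + (nsq δ : ℂ) / 4 := by
        rw [hm]; push_cast; ring
      rw [hmC]
      rw [show 2 * (Real.pi : ℂ) * Complex.I * (τ + 2) *
          ((((k1 + k2 : ℤ) : ℂ) + (nsq δ : ℂ) / 4) / 2)
        = 2 * (Real.pi : ℂ) * Complex.I * τ *
            ((((k1 + k2 : ℤ) : ℂ) + (nsq δ : ℂ) / 4) / 2)
          + (((k1 + k2 : ℤ) : ℂ) * (2 * (Real.pi : ℂ) * Complex.I)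
            + 2 * (Real.pi : ℂ) * Complex.I * ((2 * (nsq δ : ℂ)) / 8)) from by ring]
      rw [Complex.exp_add, Complex.exp_add, Complex.exp_int_mul_two_pi_mul_I]
      ring
    rw [tsum_congr key, tsum_mul_left]
  · rw [Complex.exp_eq_one_iff]
    constructor
    · rintro ⟨k, hk⟩
      refine ⟨k, ?_⟩
      have h2 : (2 * (Real.pi : ℂ) * Complex.I) ≠ 0 := Complex.two_pi_I_ne_zero
      have hc := mul_left_cancel₀ h2
        (show (2 * (Real.pi : ℂ) * Complex.I) * (2 * (nsq δ : ℂ))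
            = (2 * (Real.pi : ℂ) * Complex.I) * ((k : ℂ) * 8) by linear_combination 8 * hk)
      have hre : (nsq δ : ℂ) = 4 * (k : ℂ) := by linear_combination hc / 2
      exact_mod_cast hre
    · rintro ⟨k, hk⟩
      refine ⟨k, ?_⟩
      rw [hk]
      push_cast
      ring

end PaperFormal
end

section
/- Let C ⊆ 𝔽₂ⁿ be a singly-even self-dual code, n ∈ 8ℤ, and let Λ(C) be its Construction A lattice. Then the number of norm-2 vectors (weight-one operators) satisfies: |V₁(Λ(C))| = 3n + 16|C₄|, where |C₄| is the number of codewords of weight 4; moreover for n ≥ 24, the orbifold lattice Λ_δ^orb with δ = (1,...,1)/√2 has |V₁(Λ_δ^orb)| = n + 8|C₄|, which is strictly smaller. -/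
/-!
Write a vector of `Λ(C)` as `a / √2` with `a ∈ ℤⁿ` reducing mod 2 to a codeword. It has norm 2
exactly when `∑ aᵢ² = 4`, i.e. when `a = ±2eᵢ` (reduction `0 ∈ C`: `2n` vectors) or `a` has
entries `±1` on the support of a weight-4 codeword and `0` elsewhere (16 sign patterns each).
Since `δ · (a / √2) = (∑ aᵢ) / 2`, the `δ`-even vectors are those with `4 ∣ ∑ aᵢ`: none of the
`±2eᵢ` and 8 of the 16 sign patterns. A vector of the coset `Λ_even + δ/2` is
`(2a + 1) / (2√2)`, all of whose entries are odd multiples of `1 / (2√2)`, so its norm is at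
least `n / 8 > 2` once `n > 16`.
-/

open scoped BigOperators

namespace PaperFormal

section LatticeCoordinates

variable {n : ℕ}

noncomputable def scaleInt (a : Fin n → ℤ) : Fin n → ℝ := fun i => a i / √2

def modTwo (a : Fin n → ℤ) : Fin n → ZMod 2 := fun i => a i

lemma scaleInt_injective : Function.Injective (scaleInt (n := n)) := by
  intro a b h
  funext i
  have hi := congrFun h i
  simp only [scaleInt, div_left_inj' (Real.sqrt_pos.2 two_pos).ne'] at hi
  exact_mod_cast hi

lemma nsq_scaleInt (a : Fin n → ℤ) : nsq (scaleInt a) = ((∑ i, a i ^ 2 : ℤ) : ℝ) / 2 := by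
  simp only [nsq, dot, scaleInt, Int.cast_sum, Int.cast_pow, Finset.sum_div]
  refine Finset.sum_congr rfl fun i _ => ?_
  rw [div_mul_div_comm, Real.mul_self_sqrt zero_le_two, sq]

lemma dot_deltaAll_scaleInt (a : Fin n → ℤ) :
    dot (deltaAll n) (scaleInt a) = ((∑ i, a i : ℤ) : ℝ) / 2 := by
  simp only [dot, deltaAll, scaleInt, Int.cast_sum, Finset.sum_div]
  refine Finset.sum_congr rfl fun i _ => ?_
  rw [div_mul_div_comm, one_mul, Real.mul_self_sqrt zero_le_two]

lemma nsq_scaleInt_eq_two_iff (a : Fin n → ℤ) : nsq (scaleInt a) = 2 ↔ ∑ i, a i ^ 2 = 4 := by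
  rw [nsq_scaleInt, div_eq_iff two_ne_zero]
  exact_mod_cast Iff.rfl

lemma exists_dot_deltaAll_scaleInt_eq_two_mul_iff (a : Fin n → ℤ) :
    (∃ k : ℤ, dot (deltaAll n) (scaleInt a) = 2 * k) ↔ 4 ∣ ∑ i, a i := by
  refine exists_congr fun k => ?_
  rw [dot_deltaAll_scaleInt, div_eq_iff two_ne_zero,
    show (2 : ℝ) * k * 2 = ((4 * k : ℤ) : ℝ) by push_cast; ring]
  exact Int.cast_inj

lemma constructionA_eq_image_s19 (C : Set (Fin n → ZMod 2)) :
    constructionA C = scaleInt '' {a | modTwo a ∈ C} := by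
  ext l
  constructor
  · rintro ⟨c, hc, m, rfl⟩
    refine ⟨fun i => (c i).val + 2 * m i, ?_, ?_⟩
    · show modTwo _ ∈ C
      convert hc using 1
      funext i
      simp [modTwo, show (2 : ZMod 2) = 0 from rfl]
    · funext i
      simp [scaleInt, liftBin]
  · rintro ⟨a, ha, rfl⟩
    refine ⟨modTwo a, ha, fun i => a i / 2, ?_⟩
    funext i
    rw [scaleInt, liftBin, modTwo]
    congr 1
    exact_mod_cast (Int.emod_add_mul_ediv (a i) 2).symm.trans (by rw [ZMod.val_intCast]; rfl)

lemma nsq_scaleInt_add_half_deltaAll (a : Fin n → ℤ) :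
    nsq (scaleInt a + (2 : ℝ)⁻¹ • deltaAll n) = ((∑ i, (2 * a i + 1) ^ 2 : ℤ) : ℝ) / 8 := by
  simp only [nsq, dot, scaleInt, deltaAll, Pi.add_apply, Pi.smul_apply, smul_eq_mul,
    Int.cast_sum, Int.cast_pow, Finset.sum_div]
  refine Finset.sum_congr rfl fun i _ => ?_
  have h2 : √2 * √2 = 2 := Real.mul_self_sqrt zero_le_two
  field_simp
  push_cast
  nlinarith [h2]

lemma le_nsq_scaleInt_add_half_deltaAll (a : Fin n → ℤ) :
    (n : ℝ) / 8 ≤ nsq (scaleInt a + (2 : ℝ)⁻¹ • deltaAll n) := by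
  rw [nsq_scaleInt_add_half_deltaAll]
  gcongr
  calc (n : ℝ) = ((∑ _i : Fin n, (1 : ℤ) : ℤ) : ℝ) := by simp
    _ ≤ _ := by
      gcongr with i
      exact (one_le_sq_iff_one_le_abs _).2 (Int.one_le_abs (by omega))

end LatticeCoordinates

lemma sep_image_eq {α β : Type*} (f : α → β) (s : Set α) (p : β → Prop) :
    {y ∈ f '' s | p y} = f '' {x ∈ s | p (f x)} := by
  ext y
  constructor
  · rintro ⟨⟨x, hx, rfl⟩, hp⟩
    exact ⟨x, ⟨hx, hp⟩, rfl⟩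
  · rintro ⟨x, ⟨hx, hp⟩, rfl⟩
    exact ⟨⟨x, hx, rfl⟩, hp⟩

section NormTwoVectors

variable {n : ℕ}

lemma deltaEven_constructionA_eq_image (C : Set (Fin n → ZMod 2)) :
    deltaEven (constructionA C) (deltaAll n)
      = scaleInt '' {a | modTwo a ∈ C ∧ 4 ∣ ∑ i, a i} := by
  rw [deltaEven, constructionA_eq_image_s19, sep_image_eq]
  simp only [exists_dot_deltaAll_scaleInt_eq_two_mul_iff]
  rfl

lemma norm_two_constructionA_eq_image (C : Set (Fin n → ZMod 2)) :
    {l ∈ constructionA C | nsq l = 2} = scaleInt '' {a | modTwo a ∈ C ∧ ∑ i, a i ^ 2 = 4} := by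
  simp only [constructionA_eq_image_s19, sep_image_eq, nsq_scaleInt_eq_two_iff]
  rfl

lemma norm_two_deltaEven_constructionA_eq_image (C : Set (Fin n → ZMod 2)) :
    {l ∈ deltaEven (constructionA C) (deltaAll n) | nsq l = 2}
      = scaleInt '' {a | modTwo a ∈ C ∧ ∑ i, a i ^ 2 = 4 ∧ 4 ∣ ∑ i, a i} := by
  rw [deltaEven_constructionA_eq_image, sep_image_eq]
  congr 1
  ext a
  simp only [Set.mem_ofPred_eq, nsq_scaleInt_eq_two_iff]
  tauto

lemma nsq_ne_two_of_mem_shiftSet_constructionA (C : Set (Fin n → ZMod 2)) (hn : 16 < n)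
    {l : Fin n → ℝ} (hl : l ∈ shiftSet (constructionA C) ((2 : ℝ)⁻¹ • deltaAll n)) :
    nsq l ≠ 2 := by
  obtain ⟨_, ⟨a, -, rfl⟩, rfl⟩ := constructionA_eq_image_s19 C ▸ hl
  have hn' : (16 : ℝ) < n := by exact_mod_cast hn
  linarith [le_nsq_scaleInt_add_half_deltaAll a]

lemma norm_two_orbPlus_constructionA_eq (C : Set (Fin n → ZMod 2)) (hn : 16 < n) :
    {l ∈ orbPlus (constructionA C) (deltaAll n) | nsq l = 2}
      = {l ∈ deltaEven (constructionA C) (deltaAll n) | nsq l = 2} := by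
  refine Set.ext fun l => ⟨?_, fun ⟨hl, h2⟩ => ⟨Or.inl hl, h2⟩⟩
  rintro ⟨hl | ⟨x, hx, rfl⟩, h2⟩
  · exact ⟨hl, h2⟩
  · exact absurd h2 (nsq_ne_two_of_mem_shiftSet_constructionA C hn ⟨x, hx.1, rfl⟩)

end NormTwoVectors

section NormFourIntegerVectors

variable {n : ℕ}

lemma Int.sq_le_one_of_sq_le_four {x : ℤ} (h : x ^ 2 ≤ 4) (h4 : x ^ 2 ≠ 4) : x ^ 2 ≤ 1 := by
  have : x ≤ 2 := by nlinarith
  have : -2 ≤ x := by nlinarith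
  interval_cases x <;> simp_all

lemma Int.exists_unit_eq_two_mul_of_sq_eq_four {x : ℤ} (h : x ^ 2 = 4) : ∃ u : ℤˣ, x = 2 * u := by
  rcases sq_eq_sq_iff_eq_or_eq_neg.1 (h.trans (by norm_num : (4 : ℤ) = 2 ^ 2)) with hx | hx
  · exact ⟨1, by simp [hx]⟩
  · exact ⟨-1, by simp [hx]⟩

lemma Int.sq_eq_one_iff_cast_zmod_two_eq_one {x : ℤ} (h : x ^ 2 ≤ 1) :
    x ^ 2 = 1 ↔ (x : ZMod 2) = 1 := by
  have : x ≤ 1 := by nlinarith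
  have : -1 ≤ x := by nlinarith
  interval_cases x <;> decide

lemma Int.eq_zero_of_cast_zmod_two_ne_one {x : ℤ} (h : x ^ 2 ≤ 1) (hx : (x : ZMod 2) ≠ 1) :
    x = 0 := by
  have : x ≤ 1 := by nlinarith
  have : -1 ≤ x := by nlinarith
  interval_cases x <;> simp_all

lemma ZMod.two_eq_zero_of_ne_one {x : ZMod 2} (hx : x ≠ 1) : x = 0 := by
  revert x; decide

lemma eq_single_of_sq_eq_sum_sq {ι R : Type*} [Fintype ι] [DecidableEq ι] [Ring R] [LinearOrder R]
    [IsStrictOrderedRing R] {a : ι → R} {i : ι} (h : a i ^ 2 = ∑ j, a j ^ 2) :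
    a = Pi.single i (a i) := by
  have hrest : ∑ j ∈ Finset.univ.erase i, a j ^ 2 = 0 := by
    rw [Finset.sum_erase_eq_sub (Finset.mem_univ i), ← h, sub_self]
  funext j
  rcases eq_or_ne j i with rfl | hj
  · simp
  · rw [Pi.single_eq_of_ne hj]
    exact pow_eq_zero_iff two_ne_zero |>.1 <|
      (Finset.sum_eq_zero_iff_of_nonneg fun k _ => sq_nonneg (a k)).1 hrest j (by simp [hj])

lemma sum_sq_eq_wt_modTwo {a : Fin n → ℤ} (h : ∀ i, a i ^ 2 ≤ 1) :
    ∑ i, a i ^ 2 = wt (modTwo a) := by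
  rw [wt, Finset.card_filter, Nat.cast_sum]
  refine Finset.sum_congr rfl fun i _ => ?_
  by_cases hi : modTwo a i = 1
  · rw [if_pos hi, (Int.sq_eq_one_iff_cast_zmod_two_eq_one (h i)).2 hi, Nat.cast_one]
  · rw [if_neg hi, Int.eq_zero_of_cast_zmod_two_ne_one (h i) hi]
    simp

def doubledSingle (p : Fin n × ℤˣ) : Fin n → ℤ := Pi.single p.1 (2 * p.2)

lemma doubledSingle_injective : Function.Injective (doubledSingle (n := n)) := by
  rintro ⟨i, u⟩ ⟨j, v⟩ h
  have hi := congrFun h i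
  rcases eq_or_ne i j with rfl | hij
  · simp only [doubledSingle, Pi.single_eq_same] at hi
    rw [Units.ext (mul_left_cancel₀ two_ne_zero hi)]
  · simp [doubledSingle, Pi.single_eq_of_ne hij] at hi

lemma modTwo_doubledSingle (p : Fin n × ℤˣ) : modTwo (doubledSingle p) = 0 := by
  funext i
  simp only [modTwo, doubledSingle, Pi.single_apply]
  split_ifs <;> simp [show (2 : ZMod 2) = 0 from rfl]

lemma sum_sq_doubledSingle (p : Fin n × ℤˣ) : ∑ i, doubledSingle p i ^ 2 = 4 := by
  simp [doubledSingle, Pi.single_apply, mul_pow, ← Units.val_pow_eq_pow_val]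

lemma sum_doubledSingle (p : Fin n × ℤˣ) : ∑ i, doubledSingle p i = 2 * p.2 := by
  simp [doubledSingle]

noncomputable def supportEquivFin (c : Fin n → ZMod 2) (hc : wt c = 4) :
    {i // c i = 1} ≃ Fin 4 :=
  Fintype.equivFinOfCardEq (by rw [Fintype.card_subtype]; exact hc)

noncomputable def signedCodeword (C : Set (Fin n → ZMod 2))
    (p : {c ∈ C | wt c = 4} × (Fin 4 → ℤˣ)) : Fin n → ℤ :=
  fun i => if h : p.1.1 i = 1 then p.2 (supportEquivFin p.1.1 p.1.2.2 ⟨i, h⟩) else 0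

lemma modTwo_signedCodeword (C : Set (Fin n → ZMod 2)) (p : {c ∈ C | wt c = 4} × (Fin 4 → ℤˣ)) :
    modTwo (signedCodeword C p) = p.1 := by
  funext i
  simp only [modTwo, signedCodeword]
  split_ifs with h
  · rw [h]
    rcases Int.units_eq_one_or (p.2 (supportEquivFin p.1.1 p.1.2.2 ⟨i, h⟩)) with hu | hu <;>
      simp [hu]
  · rw [Int.cast_zero, ZMod.two_eq_zero_of_ne_one h]

lemma sum_sq_signedCodeword (C : Set (Fin n → ZMod 2)) (p : {c ∈ C | wt c = 4} × (Fin 4 → ℤˣ)) :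
    ∑ i, signedCodeword C p i ^ 2 = 4 := by
  have h1 : ∀ i, signedCodeword C p i ^ 2 ≤ 1 := fun i => by
    unfold signedCodeword
    split_ifs <;> simp [← Units.val_pow_eq_pow_val]
  rw [sum_sq_eq_wt_modTwo h1, modTwo_signedCodeword, p.1.2.2, Nat.cast_ofNat]

lemma sum_signedCodeword (C : Set (Fin n → ZMod 2)) (p : {c ∈ C | wt c = 4} × (Fin 4 → ℤˣ)) :
    ∑ i, signedCodeword C p i = ∑ j, (p.2 j : ℤ) := by
  rw [← Fintype.sum_subtype_add_sum_subtype (fun i => p.1.1 i = 1)]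
  have hoff : ∑ i : {i // ¬ p.1.1 i = 1}, signedCodeword C p i = 0 :=
    Finset.sum_eq_zero fun i _ => dif_neg i.2
  rw [hoff, add_zero, ← Equiv.sum_comp (supportEquivFin p.1.1 p.1.2.2)]
  exact Finset.sum_congr rfl fun i _ => dif_pos i.2

lemma signedCodeword_injective (C : Set (Fin n → ZMod 2)) :
    Function.Injective (signedCodeword C) := by
  rintro ⟨c, s⟩ ⟨c', s'⟩ h
  obtain rfl : c = c' := Subtype.ext <| by
    simpa [modTwo_signedCodeword] using congrArg modTwo h
  refine Prod.ext rfl (funext fun j => Units.ext ?_)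
  have hj := congrFun h ((supportEquivFin c.1 c.2.2).symm j)
  simp only [signedCodeword, dif_pos ((supportEquivFin c.1 c.2.2).symm j).2, Subtype.coe_eta,
    Equiv.apply_symm_apply] at hj
  exact hj

lemma mem_range_signedCodeword {C : Set (Fin n → ZMod 2)} {a : Fin n → ℤ}
    (ha : ∀ i, a i ^ 2 ≤ 1) (hC : modTwo a ∈ C) (hw : wt (modTwo a) = 4) :
    a ∈ Set.range (signedCodeword C) := by
  set e := supportEquivFin (modTwo a) hw
  have hunit : ∀ i, modTwo a i = 1 → a i * a i = 1 := fun i hi => by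
    rw [← sq]; exact (Int.sq_eq_one_iff_cast_zmod_two_eq_one (ha i)).2 hi
  refine ⟨(⟨modTwo a, hC, hw⟩,
    fun j => Units.mkOfMulEqOne _ _ (hunit _ (e.symm j).2)), funext fun i => ?_⟩
  simp only [signedCodeword]
  split_ifs with h
  · simp [e]
  · exact (Int.eq_zero_of_cast_zmod_two_ne_one (ha i) h).symm

end NormFourIntegerVectors

section Counting

variable {n : ℕ}

lemma normFour_eq_union {C : Set (Fin n → ZMod 2)} (h0 : 0 ∈ C) :
    {a : Fin n → ℤ | modTwo a ∈ C ∧ ∑ i, a i ^ 2 = 4}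
      = Set.range doubledSingle ∪ Set.range (signedCodeword C) := by
  ext a
  constructor
  · rintro ⟨hC, h4⟩
    by_cases hlong : ∃ i, a i ^ 2 = 4
    · obtain ⟨i, hi⟩ := hlong
      obtain ⟨u, hu⟩ := Int.exists_unit_eq_two_mul_of_sq_eq_four hi
      refine Or.inl ⟨(i, u), ?_⟩
      rw [doubledSingle, ← hu, ← eq_single_of_sq_eq_sum_sq (hi.trans h4.symm)]
    · push Not at hlong
      have h1 : ∀ i, a i ^ 2 ≤ 1 := fun i => Int.sq_le_one_of_sq_le_four
        (h4 ▸ Finset.single_le_sum (fun j _ => sq_nonneg (a j)) (Finset.mem_univ i)) (hlong i)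
      exact Or.inr <| mem_range_signedCodeword h1 hC <| by
        exact_mod_cast (sum_sq_eq_wt_modTwo h1).symm.trans h4
  · rintro (⟨p, rfl⟩ | ⟨p, rfl⟩)
    · exact ⟨modTwo_doubledSingle p ▸ h0, sum_sq_doubledSingle p⟩
    · exact ⟨modTwo_signedCodeword C p ▸ p.1.2.1, sum_sq_signedCodeword C p⟩

lemma ncard_normFour {C : Set (Fin n → ZMod 2)} (h0 : 0 ∈ C) :
    {a : Fin n → ℤ | modTwo a ∈ C ∧ ∑ i, a i ^ 2 = 4}.ncard
      = 2 * n + 16 * {c ∈ C | wt c = 4}.ncard := by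
  have hdisj : Disjoint (Set.range doubledSingle) (Set.range (signedCodeword C)) := by
    refine Set.disjoint_left.2 ?_
    rintro _ ⟨p, rfl⟩ ⟨q, hq⟩
    have hw := congrArg (fun a => wt (modTwo a)) hq
    simp only [modTwo_signedCodeword, modTwo_doubledSingle, q.1.2.2] at hw
    simp [wt] at hw
  rw [normFour_eq_union h0, Set.ncard_union_eq hdisj (Set.finite_range _) (Set.finite_range _),
    Set.ncard_range_of_injective doubledSingle_injective,
    Set.ncard_range_of_injective (signedCodeword_injective C), Nat.card_prod, Nat.card_prod,
    Nat.card_coe_set_eq]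
  simp [mul_comm]

lemma normFour_dvd_four_eq_image {C : Set (Fin n → ZMod 2)} (h0 : 0 ∈ C) :
    {a : Fin n → ℤ | modTwo a ∈ C ∧ ∑ i, a i ^ 2 = 4 ∧ 4 ∣ ∑ i, a i}
      = signedCodeword C '' (Set.univ ×ˢ {s | 4 ∣ ∑ j, (s j : ℤ)}) := by
  ext a
  constructor
  · rintro ⟨hC, h4, hdvd⟩
    rcases (normFour_eq_union h0).le ⟨hC, h4⟩ with ⟨p, rfl⟩ | ⟨p, rfl⟩
    · rw [sum_doubledSingle] at hdvd
      rcases Int.units_eq_one_or p.2 with hu | hu <;> simp [hu] at hdvd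
    · exact ⟨p, ⟨trivial, by rwa [sum_signedCodeword] at hdvd⟩, rfl⟩
  · rintro ⟨p, ⟨-, hdvd⟩, rfl⟩
    exact ⟨modTwo_signedCodeword C p ▸ p.1.2.1, sum_sq_signedCodeword C p,
      (sum_signedCodeword C p).symm ▸ hdvd⟩

lemma ncard_normFour_dvd_four {C : Set (Fin n → ZMod 2)} (h0 : 0 ∈ C) :
    {a : Fin n → ℤ | modTwo a ∈ C ∧ ∑ i, a i ^ 2 = 4 ∧ 4 ∣ ∑ i, a i}.ncard
      = 8 * {c ∈ C | wt c = 4}.ncard := by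
  have hsigns : {s : Fin 4 → ℤˣ | 4 ∣ ∑ j, (s j : ℤ)}.ncard = 8 := by
    rw [← Nat.card_coe_set_eq, Nat.card_eq_fintype_card]
    decide
  rw [normFour_dvd_four_eq_image h0,
    Set.ncard_image_of_injective _ (signedCodeword_injective C), Set.ncard_prod, hsigns,
    Set.ncard_univ, Nat.card_coe_set_eq, mul_comm]

end Counting

lemma zero_mem_dualCode {n k : ℕ} (C : Set (Fin n → ZMod k)) : 0 ∈ dualCode C :=
  fun c _ => by simp [codeDot]

theorem weight_one_operator_counts_general {n : ℕ} (C : Set (Fin n → ZMod 2))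
    (hC : IsSinglyEvenSelfDual C) :
    n + {l ∈ constructionA C | nsq l = 2}.ncard
      = 3 * n + 16 * {c ∈ C | wt c = 4}.ncard ∧
    (24 ≤ n →
      n + {l ∈ orbPlus (constructionA C) (deltaAll n) | nsq l = 2}.ncard
          = n + 8 * {c ∈ C | wt c = 4}.ncard ∧
      n + 8 * {c ∈ C | wt c = 4}.ncard < 3 * n + 16 * {c ∈ C | wt c = 4}.ncard) := by
  have h0 : (0 : Fin n → ZMod 2) ∈ C := hC.1 ▸ zero_mem_dualCode C
  have hΛ : {l ∈ constructionA C | nsq l = 2}.ncard = 2 * n + 16 * {c ∈ C | wt c = 4}.ncard := by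
    rw [norm_two_constructionA_eq_image, Set.ncard_image_of_injective _ scaleInt_injective,
      ncard_normFour h0]
  refine ⟨by omega, fun hn => ?_⟩
  have hΛorb : {l ∈ orbPlus (constructionA C) (deltaAll n) | nsq l = 2}.ncard
      = 8 * {c ∈ C | wt c = 4}.ncard := by
    rw [norm_two_orbPlus_constructionA_eq C (by omega),
      norm_two_deltaEven_constructionA_eq_image, Set.ncard_image_of_injective _ scaleInt_injective,
      ncard_normFour_dvd_four h0]
  omega

/-- counts of weight-one operators: `|V₁(Λ(C))| = 3n + 16|C₄|`, and for
`n ≥ 24` the orbifold lattice has `|V₁| = n + 8|C₄|`, strictly smaller. -/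
theorem weight_one_operator_counts {n : ℕ} (C : Set (Fin n → ZMod 2))
    (hC : IsSinglyEvenSelfDual C) (hn : 8 ∣ n) :
    n + {l ∈ constructionA C | nsq l = 2}.ncard
      = 3 * n + 16 * {c ∈ C | wt c = 4}.ncard ∧
    (24 ≤ n →
      n + {l ∈ orbPlus (constructionA C) (deltaAll n) | nsq l = 2}.ncard
          = n + 8 * {c ∈ C | wt c = 4}.ncard ∧
      n + 8 * {c ∈ C | wt c = 4}.ncard < 3 * n + 16 * {c ∈ C | wt c = 4}.ncard) :=
  weight_one_operator_counts_general C hC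

end PaperFormal
end
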